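/- arXiv:0912.5090 — 7 statements merged into one kernel-verified Lean document; each statement's English description precedes it below -/
import Mathlib

section
/- Let Γ be a nonempty finite connected trivalent flag graph with first Betti number g, and let M be an n-dimensional ℂ-vector space. Then the ℂ-vector space of compatible numberings of Γ with values in M has dimension exactly n·g. -/
/-!
Compatible numberings are the kernel of the vertex-sum map `∂` restricted to the space `W` of
`M`-valued functions on the bounded flags with `f (ι x) = -f x`. Choosing one flag of each bounded
edge identifies `W` with `M`-valued functions on the edges, so `dim W = n · |B| / 2`. Connectivity
makes the image of `∂` exactly the functions `V → M` with total sum zero: the image of the edge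
`{x, ι x}` is `δ_{π x} - δ_{π (ι x)}`, and these differences span that space along paths. Hence
`dim ker ∂ = n · |B| / 2 - n · (|V| - 1) = n · g`.
-/

open Finset

/-- The submodule of compatible numberings of a flag graph
(vertices `V`, flags `F`, vertex map `π`, bounded flags `B`, involution `ι`)
with values in an `R`-module `M`: functions `f : F → M` vanishing on unbounded flags,
summing to zero over the flags at each vertex, and satisfying `f x + f (ι x) = 0`
for every bounded flag `x`. -/
def compatibleNumberings (R : Type) [CommRing R] {V F : Type} [Fintype F] [DecidableEq V]
    (π : F → V) (B : Finset F) (ι : F → F)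
    (M : Type) [AddCommGroup M] [Module R M] : Submodule R (F → M) where
  carrier := {f | (∀ x, x ∉ B → f x = 0) ∧
    (∀ v : V, ∑ x ∈ Finset.univ.filter (fun y => π y = v), f x = 0) ∧
    (∀ x ∈ B, f x + f (ι x) = 0)}
  add_mem' := by
    rintro f g ⟨hf1, hf2, hf3⟩ ⟨hg1, hg2, hg3⟩
    refine ⟨fun x hx => ?_, fun v => ?_, fun x hx => ?_⟩
    · simp [Pi.add_apply, hf1 x hx, hg1 x hx]
    · simp only [Pi.add_apply, Finset.sum_add_distrib, hf2 v, hg2 v, add_zero]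
    · have h : f x + g x + (f (ι x) + g (ι x)) = f x + f (ι x) + (g x + g (ι x)) := by abel
      simp only [Pi.add_apply]
      rw [h, hf3 x hx, hg3 x hx, add_zero]
  zero_mem' := by
    refine ⟨fun x _ => rfl, fun v => ?_, fun x _ => by simp⟩
    simp
  smul_mem' := by
    rintro c f ⟨hf1, hf2, hf3⟩
    refine ⟨fun x hx => ?_, fun v => ?_, fun x hx => ?_⟩
    · simp [Pi.smul_apply, hf1 x hx]
    · simp only [Pi.smul_apply, ← Finset.smul_sum, hf2 v, smul_zero]
    · simp only [Pi.smul_apply, ← smul_add, hf3 x hx, smul_zero]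

/-- The underlying simple graph of a flag graph: vertices `v, w` are adjacent if they are
distinct and joined by a bounded edge `{x, ι x}`. -/
def flagGraph {V F : Type} (π : F → V) (B : Finset F) (ι : F → F) : SimpleGraph V :=
  SimpleGraph.fromRel (fun v w => ∃ x ∈ B, π x = v ∧ π (ι x) = w)

namespace FlagGraph

variable {V F : Type} {R : Type} {M : Type} [AddCommGroup M]

section Definitions

variable (R M) [Ring R] [Module R M]

def antisymmetricNumberings (B : Finset F) (ι : F → F) : Submodule R (F → M) where
  carrier := {f | (∀ x, x ∉ B → f x = 0) ∧ ∀ x ∈ B, f x + f (ι x) = 0}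
  add_mem' := by
    rintro f g ⟨hf₀, hf⟩ ⟨hg₀, hg⟩
    refine ⟨fun x hx => by simp [hf₀ x hx, hg₀ x hx], fun x hx => ?_⟩
    rw [Pi.add_apply, Pi.add_apply, add_add_add_comm, hf x hx, hg x hx, add_zero]
  zero_mem' := ⟨fun _ _ => rfl, fun _ _ => add_zero 0⟩
  smul_mem' c f := fun ⟨hf₀, hf⟩ =>
    ⟨fun x hx => by simp [hf₀ x hx],
      fun x hx => by simp only [Pi.smul_apply, ← smul_add, hf x hx, smul_zero]⟩

def vertexSum [Fintype F] [DecidableEq V] (π : F → V) : (F → M) →ₗ[R] (V → M) where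
  toFun f v := ∑ x ∈ univ.filter (fun y => π y = v), f x
  map_add' f g := by funext v; simp [sum_add_distrib]
  map_smul' c f := by funext v; simp [smul_sum]

def totalSum [Fintype V] : (V → M) →ₗ[R] M := ∑ v, LinearMap.proj v

end Definitions

section Ring

variable [Ring R] [Module R M]

theorem vertexSum_apply [Fintype F] [DecidableEq V] (π : F → V) (f : F → M) (v : V) :
    vertexSum R M π f v = ∑ x ∈ univ.filter (fun y => π y = v), f x := rfl

theorem vertexSum_single [Fintype F] [DecidableEq V] [DecidableEq F] (π : F → V) (x : F) (m : M) :
    vertexSum R M π (Pi.single x m) = Pi.single (π x) m := by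
  funext v
  simp [vertexSum_apply, Pi.single_apply, eq_comm]

theorem totalSum_apply [Fintype V] (h : V → M) : totalSum R M h = ∑ v, h v := by
  simp [totalSum]

theorem totalSum_vertexSum [Fintype V] [Fintype F] [DecidableEq V] (π : F → V) (f : F → M) :
    totalSum R M (vertexSum R M π f) = ∑ x, f x := by
  simp only [totalSum_apply, vertexSum_apply]
  exact sum_fiberwise univ π f

theorem totalSum_surjective [Fintype V] [Nonempty V] :
    Function.Surjective (totalSum R M (V := V)) := by
  classical
  intro m
  refine ⟨Pi.single (Classical.arbitrary V) m, ?_⟩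
  simp [totalSum_apply]

theorem single_sub_single_mem_antisymmetricNumberings [DecidableEq F] {B : Finset F} {ι : F → F}
    (hιB : ∀ x ∈ B, ι x ∈ B) (hιinv : ∀ x ∈ B, ι (ι x) = x) {x : F} (hx : x ∈ B) (m : M) :
    Pi.single x m - Pi.single (ι x) m ∈ antisymmetricNumberings R M B ι := by
  refine ⟨fun y hy => ?_, fun y hy => ?_⟩
  · have hyx : y ≠ x := fun h => hy (h ▸ hx)
    have hyιx : y ≠ ι x := fun h => hy (h ▸ hιB x hx)
    simp [hyx, hyιx]
  · have h₁ : ι y = x ↔ y = ι x :=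
      ⟨fun h => by rw [← h, hιinv y hy], fun h => by rw [h, hιinv x hx]⟩
    have h₂ : ι y = ι x ↔ y = x :=
      ⟨fun h => by rw [← hιinv y hy, h, hιinv x hx], fun h => by rw [h]⟩
    simp only [Pi.sub_apply, Pi.single_apply, h₁, h₂]
    abel

end Ring

theorem compatibleNumberings_eq_inf [CommRing R] [Module R M] [Fintype F] [DecidableEq V]
    (π : F → V) (B : Finset F) (ι : F → F) :
    compatibleNumberings R π B ι M =
      antisymmetricNumberings R M B ι ⊓ LinearMap.ker (vertexSum R M π) := by
  ext f
  exact ⟨fun ⟨h₀, hv, hι⟩ => ⟨⟨h₀, hι⟩, funext hv⟩, fun ⟨⟨h₀, hι⟩, hv⟩ => ⟨h₀, congrFun hv, hι⟩⟩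

section Orientation

/-- Orienting every bounded edge `{x, ι x}` amounts to choosing one of its two flags. -/
def IsOrientation (B S : Finset F) (ι : F → F) : Prop :=
  S ⊆ B ∧ ∀ x ∈ B, (x ∈ S ↔ ι x ∉ S)

variable {B S : Finset F} {ι : F → F}

theorem exists_isOrientation [Fintype F] (hιB : ∀ x ∈ B, ι x ∈ B)
    (hιinv : ∀ x ∈ B, ι (ι x) = x) (hιne : ∀ x ∈ B, ι x ≠ x) : ∃ S, IsOrientation B S ι := by
  let e := Fintype.equivFin F
  refine ⟨B.filter fun x => e x < e (ι x), filter_subset _ _, fun x hx => ?_⟩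
  have hne : e x ≠ e (ι x) := fun h => hιne x hx (e.injective h).symm
  simp only [mem_filter, hx, hιB x hx, hιinv x hx, true_and, not_lt]
  exact (Ne.le_iff_lt hne).symm

theorem IsOrientation.iota_mem_iff (hS : IsOrientation B S ι) (hιB : ∀ x ∈ B, ι x ∈ B)
    (hιinv : ∀ x ∈ B, ι (ι x) = x) {x : F} (hx : x ∈ B) : ι x ∈ S ↔ x ∉ S := by
  rw [hS.2 (ι x) (hιB x hx), hιinv x hx]

theorem IsOrientation.sum_sdiff [DecidableEq F] {N : Type} [AddCommMonoid N]
    (hS : IsOrientation B S ι) (hιB : ∀ x ∈ B, ι x ∈ B) (hιinv : ∀ x ∈ B, ι (ι x) = x)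
    (φ : F → N) : ∑ x ∈ B \ S, φ x = ∑ x ∈ S, φ (ι x) := by
  refine (sum_nbij' ι ι (fun x hx => ?_) (fun x hx => ?_) (fun x hx => hιinv x (hS.1 hx))
    (fun x hx => hιinv x (mem_sdiff.1 hx).1) (fun _ _ => rfl)).symm
  · exact mem_sdiff.2 ⟨hιB x (hS.1 hx), (hS.2 x (hS.1 hx)).1 hx⟩
  · obtain ⟨hxB, hxS⟩ := mem_sdiff.1 hx
    exact (hS.iota_mem_iff hιB hιinv hxB).2 hxS

theorem IsOrientation.card_eq_two_mul (hS : IsOrientation B S ι) (hιB : ∀ x ∈ B, ι x ∈ B)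
    (hιinv : ∀ x ∈ B, ι (ι x) = x) : #B = 2 * #S := by
  classical
  have hsdiff : #(B \ S) = #S := by
    rw [card_eq_sum_ones, card_eq_sum_ones]
    exact hS.sum_sdiff hιB hιinv _
  have := card_sdiff_add_card_eq_card hS.1
  omega

theorem IsOrientation.sum_eq_zero [Ring R] [Module R M] [Fintype F]
    (hS : IsOrientation B S ι) (hιB : ∀ x ∈ B, ι x ∈ B) (hιinv : ∀ x ∈ B, ι (ι x) = x)
    {f : F → M} (hf : f ∈ antisymmetricNumberings R M B ι) : ∑ x, f x = 0 := by
  classical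
  obtain ⟨hf₀, hf⟩ := hf
  calc ∑ x, f x = ∑ x ∈ B, f x := (sum_subset (subset_univ B) fun x _ hx => hf₀ x hx).symm
    _ = ∑ x ∈ B \ S, f x + ∑ x ∈ S, f x := (Finset.sum_sdiff hS.1).symm
    _ = ∑ x ∈ S, (f x + f (ι x)) := by
      rw [hS.sum_sdiff hιB hιinv, add_comm, sum_add_distrib]
    _ = 0 := Finset.sum_eq_zero fun x hx => hf x (hS.1 hx)

theorem IsOrientation.bijective_restrict [Ring R] [Module R M] (hS : IsOrientation B S ι)
    (hιB : ∀ x ∈ B, ι x ∈ B) (hιinv : ∀ x ∈ B, ι (ι x) = x) :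
    Function.Bijective (LinearMap.funLeft R M ((↑) : S → F) ∘ₗ
      (antisymmetricNumberings R M B ι).subtype) := by
  classical
  refine ⟨(injective_iff_map_eq_zero _).2 fun f hf => ?_, fun h => ?_⟩
  · obtain ⟨hf₀, hfι⟩ := f.2
    have hS0 : ∀ x ∈ S, f.1 x = 0 := fun x hx => congrFun hf ⟨x, hx⟩
    ext x
    by_cases hxB : x ∈ B
    · by_cases hxS : x ∈ S
      · exact hS0 x hxS
      · rw [eq_neg_of_add_eq_zero_left (hfι x hxB),
          hS0 _ ((hS.iota_mem_iff hιB hιinv hxB).2 hxS), neg_zero]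
        rfl
    · exact hf₀ x hxB
  · -- extend `h` by zero, then antisymmetrize on `B`
    let g : F → M := fun x => if hx : x ∈ S then h ⟨x, hx⟩ else 0
    let f : F → M := fun x => if x ∈ B then g x - g (ι x) else 0
    have hf : f ∈ antisymmetricNumberings R M B ι :=
      ⟨fun x hx => if_neg hx, fun x hx => by simp [f, hx, hιB x hx, hιinv x hx]⟩
    refine ⟨⟨f, hf⟩, funext fun t => ?_⟩
    have ht : ι t ∉ S := (hS.2 t (hS.1 t.2)).1 t.2
    simp [f, g, hS.1 t.2, ht]

end Orientation

section Connectivity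

theorem exists_flag_of_adj {π : F → V} {B : Finset F} {ι : F → F}
    (hιB : ∀ x ∈ B, ι x ∈ B) (hιinv : ∀ x ∈ B, ι (ι x) = x) {v w : V}
    (h : (flagGraph π B ι).Adj v w) : ∃ x ∈ B, π x = v ∧ π (ι x) = w := by
  obtain ⟨-, h | ⟨x, hx, rfl, rfl⟩⟩ := (SimpleGraph.fromRel_adj _ _ _).1 h
  · exact h
  · exact ⟨ι x, hιB x hx, rfl, by rw [hιinv x hx]⟩

variable [Ring R] [Module R M] [Fintype F] [DecidableEq V] {π : F → V} {B : Finset F} {ι : F → F}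

theorem single_sub_single_mem_range (hιB : ∀ x ∈ B, ι x ∈ B) (hιinv : ∀ x ∈ B, ι (ι x) = x)
    {v w : V} (h : (flagGraph π B ι).Reachable v w) (m : M) :
    Pi.single v m - Pi.single w m ∈
      LinearMap.range ((vertexSum R M π).domRestrict (antisymmetricNumberings R M B ι)) := by
  classical
  obtain ⟨p⟩ := h
  induction p with
  | nil => simp
  | cons hadj _ ih =>
    obtain ⟨x, hx, rfl, rfl⟩ := exists_flag_of_adj hιB hιinv hadj
    rw [← sub_add_sub_cancel _ (Pi.single (π (ι x)) m)]
    refine add_mem ⟨⟨_, single_sub_single_mem_antisymmetricNumberings hιB hιinv hx m⟩, ?_⟩ ih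
    simp [vertexSum_single]

theorem range_vertexSum_domRestrict [Fintype V] (hιB : ∀ x ∈ B, ι x ∈ B)
    (hιinv : ∀ x ∈ B, ι (ι x) = x) (hιne : ∀ x ∈ B, ι x ≠ x)
    (hconn : (flagGraph π B ι).Connected) :
    LinearMap.range ((vertexSum R M π).domRestrict (antisymmetricNumberings R M B ι)) =
      LinearMap.ker (totalSum R M) := by
  apply le_antisymm
  · rintro _ ⟨f, rfl⟩
    obtain ⟨S, hS⟩ := exists_isOrientation hιB hιinv hιne
    rw [LinearMap.mem_ker, LinearMap.domRestrict_apply, totalSum_vertexSum]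
    exact hS.sum_eq_zero hιB hιinv f.2
  · intro h hh
    obtain ⟨v₀⟩ := hconn.nonempty
    have hzero : ∑ v, Pi.single v₀ (h v) = (0 : V → M) := by
      rw [← Pi.single_zero v₀, ← LinearMap.mem_ker.1 hh, totalSum_apply]
      exact (map_sum (AddMonoidHom.single (fun _ => M) v₀) h univ).symm
    have hdecomp : h = ∑ v, (Pi.single v (h v) - Pi.single v₀ (h v)) := by
      rw [sum_sub_distrib, univ_sum_single, hzero, sub_zero]
    rw [hdecomp]
    exact sum_mem fun v _ => single_sub_single_mem_range hιB hιinv (hconn.preconnected v v₀) (h v)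

end Connectivity

section Dimension

variable {K : Type} [Field K] [Module K M]

theorem finrank_compatibleNumberings [Fintype F] [DecidableEq V] (π : F → V) (B : Finset F)
    (ι : F → F) : Module.finrank K (compatibleNumberings K π B ι M) =
      Module.finrank K (LinearMap.ker
        ((vertexSum K M π).domRestrict (antisymmetricNumberings K M B ι))) := by
  rw [compatibleNumberings_eq_inf, LinearMap.ker_domRestrict,
    ← (Submodule.comapSubtypeEquivOfLe inf_le_left).finrank_eq, Submodule.comap_inf,
    Submodule.comap_subtype_self, top_inf_eq]

variable [FiniteDimensional K M]

theorem two_mul_finrank_antisymmetricNumberings [Fintype F] {B : Finset F} {ι : F → F}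
    (hιB : ∀ x ∈ B, ι x ∈ B) (hιinv : ∀ x ∈ B, ι (ι x) = x) (hιne : ∀ x ∈ B, ι x ≠ x) :
    2 * Module.finrank K (antisymmetricNumberings K M B ι) = #B * Module.finrank K M := by
  obtain ⟨S, hS⟩ := exists_isOrientation hιB hιinv hιne
  rw [(LinearEquiv.ofBijective _ (hS.bijective_restrict hιB hιinv)).finrank_eq,
    Module.finrank_pi_fintype, sum_const, card_univ, Fintype.card_coe, smul_eq_mul,
    hS.card_eq_two_mul hιB hιinv, mul_assoc]

theorem finrank_ker_totalSum_add [Fintype V] [Nonempty V] :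
    Module.finrank K (LinearMap.ker (totalSum K M (V := V))) + Module.finrank K M =
      Fintype.card V * Module.finrank K M := by
  have h := (totalSum K M (V := V)).finrank_range_add_finrank_ker
  rw [LinearMap.range_eq_top.2 totalSum_surjective, finrank_top, Module.finrank_pi_fintype,
    sum_const, card_univ, smul_eq_mul] at h
  omega

end Dimension

end FlagGraph

theorem dim_compatibleNumberings_module_general
    {V F : Type} [Fintype V] [Fintype F] [DecidableEq V]
    (π : F → V) (B : Finset F) (ι : F → F) (g n : ℕ)
    (hιB : ∀ x ∈ B, ι x ∈ B)
    (hιinv : ∀ x ∈ B, ι (ι x) = x)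
    (hιne : ∀ x ∈ B, ι x ≠ x)
    (hconn : (flagGraph π B ι).Connected)
    (hbetti : B.card + 2 = 2 * Fintype.card V + 2 * g)
    (M : Type) [AddCommGroup M] [Module ℂ M] [FiniteDimensional ℂ M]
    (hM : Module.finrank ℂ M = n) :
    Module.finrank ℂ ↥(compatibleNumberings ℂ π B ι M) = n * g := by
  have : Nonempty V := hconn.nonempty
  have hrank := ((FlagGraph.vertexSum ℂ M π).domRestrict
    (FlagGraph.antisymmetricNumberings ℂ M B ι)).finrank_range_add_finrank_ker
  rw [FlagGraph.range_vertexSum_domRestrict hιB hιinv hιne hconn] at hrank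
  have hW := FlagGraph.two_mul_finrank_antisymmetricNumberings (K := ℂ) (M := M) hιB hιinv hιne
  have hker := FlagGraph.finrank_ker_totalSum_add (K := ℂ) (M := M) (V := V)
  have hbetti' := congrArg (· * n) hbetti
  rw [FlagGraph.finrank_compatibleNumberings]
  subst hM
  simp only [add_mul] at hbetti'
  linarith

/-- For a nonempty finite connected trivalent flag graph `Γ` with first Betti number `g`
and an `n`-dimensional `ℂ`-vector space `M`, the space of compatible numberings of `Γ`
with values in `M` has dimension exactly `n * g`. -/
theorem dim_compatibleNumberings_module
    {V F : Type} [Fintype V] [Fintype F] [DecidableEq V] [DecidableEq F] [Nonempty V]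
    (π : F → V) (B : Finset F) (ι : F → F) (g n : ℕ)
    (htri : ∀ v : V, (Finset.univ.filter (fun x => π x = v)).card = 3)
    (hιB : ∀ x ∈ B, ι x ∈ B)
    (hιinv : ∀ x ∈ B, ι (ι x) = x)
    (hιne : ∀ x ∈ B, ι x ≠ x)
    (hconn : (flagGraph π B ι).Connected)
    (hbetti : B.card + 2 = 2 * Fintype.card V + 2 * g)
    (M : Type) [AddCommGroup M] [Module ℂ M] [FiniteDimensional ℂ M]
    (hM : Module.finrank ℂ M = n) :
    Module.finrank ℂ ↥(compatibleNumberings ℂ π B ι M) = n * g :=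
  dim_compatibleNumberings_module_general π B ι g n hιB hιinv hιne hconn hbetti M hM
end

section
/- Let Γ be a nonempty finite connected trivalent flag graph whose first Betti number is 0 (i.e., whose underlying graph is a tree). Then for every ℂ-vector space M, the only compatible numbering of Γ with values in M is the identically zero function. -/
open Finset

/-!
Each bounded edge `{x, ι x}` has two flags and every edge of the underlying simple graph comes
from one, so that graph has at most `|B| / 2 = |V| - 1` edges. Being connected, it is a tree,
and the count is tight: distinct bounded edges give distinct non-loop edges of the tree. For a
bounded flag `x`, let `S` be the side of `π x` once the bridge `{x, ι x}` is removed. Summing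
the vertex conditions over `S`, the bounded edges inside `S` cancel in pairs, and `x` is the only
flag leaving `S`, so `f x = 0`.
-/

theorem Finset.card_filter_eq_of_card_le_mul_card_image {α β : Type*} [DecidableEq β]
    {f : α → β} {s : Finset α} {n : ℕ} (hn : ∀ b ∈ s.image f, n ≤ #{a ∈ s | f a = b})
    (hs : #s ≤ n * #(s.image f)) {b : β} (hb : b ∈ s.image f) : #{a ∈ s | f a = b} = n := by
  refine (hn b hb).antisymm' (not_lt.mp fun hlt => hs.not_gt ?_)
  calc n * #(s.image f) = ∑ _c ∈ s.image f, n := by simp [mul_comm]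
    _ < ∑ c ∈ s.image f, #{a ∈ s | f a = c} := sum_lt_sum hn ⟨b, hb, hlt⟩
    _ = #s := (card_eq_sum_card_image f s).symm

theorem SimpleGraph.eq_of_adj_of_reachable_deleteEdges {V : Type*} {G : SimpleGraph V}
    {e : Sym2 V} {v a b : V} (hab : G.Adj a b) (ha : (G.deleteEdges {e}).Reachable v a)
    (hb : ¬ (G.deleteEdges {e}).Reachable v b) : s(a, b) = e := by
  by_contra hne
  exact hb (ha.trans (SimpleGraph.Adj.reachable (by simpa using ⟨hab, hne⟩)))

section FlagGraph

variable {V F : Type} {π : F → V} {B : Finset F} {ι : F → F}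

def flagEdge (π : F → V) (ι : F → F) (x : F) : Sym2 V := s(π x, π (ι x))

theorem flagEdge_involution (hιinv : ∀ x ∈ B, ι (ι x) = x) {x : F} (hx : x ∈ B) :
    flagEdge π ι (ι x) = flagEdge π ι x := by
  simp [flagEdge, hιinv x hx, Sym2.eq_swap]

variable [DecidableEq V]

theorem edgeSet_flagGraph_subset :
    (flagGraph π B ι).edgeSet ⊆ ↑(B.image (flagEdge π ι)) := by
  intro e he
  induction e using Sym2.ind with
  | _ v w =>
    obtain ⟨-, ⟨x, hx, rfl, rfl⟩ | ⟨x, hx, rfl, rfl⟩⟩ := he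
    · exact mem_image_of_mem _ hx
    · exact mem_image.mpr ⟨x, hx, Sym2.eq_swap⟩

theorem two_le_card_filter_flagEdge (hιB : ∀ x ∈ B, ι x ∈ B)
    (hιinv : ∀ x ∈ B, ι (ι x) = x) (hιne : ∀ x ∈ B, ι x ≠ x) {x : F} (hx : x ∈ B) :
    2 ≤ #{y ∈ B | flagEdge π ι y = flagEdge π ι x} := by
  classical
  calc 2 = #{x, ι x} := (card_pair (hιne x hx).symm).symm
    _ ≤ _ := card_le_card (by
      simp [insert_subset_iff, hx, hιB x hx, flagEdge_involution hιinv hx])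

theorem flagGraph_card_eq (hιB : ∀ x ∈ B, ι x ∈ B) (hιinv : ∀ x ∈ B, ι (ι x) = x)
    (hιne : ∀ x ∈ B, ι x ≠ x) (hconn : (flagGraph π B ι).Connected)
    (hcard : #B + 2 = 2 * Nat.card V) :
    (flagGraph π B ι).edgeSet.ncard = #(B.image (flagEdge π ι)) ∧
      #B = 2 * #(B.image (flagEdge π ι)) := by
  have hV := hconn.card_vert_le_card_edgeSet_add_one
  have hE : (flagGraph π B ι).edgeSet.ncard ≤ #(B.image (flagEdge π ι)) := by
    rw [← Set.ncard_coe_finset]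
    exact Set.ncard_le_ncard edgeSet_flagGraph_subset (Finset.finite_toSet _)
  have hB : 2 * #(B.image (flagEdge π ι)) ≤ #B := mul_card_image_le_card B 2 <| by
    simpa using fun x hx => two_le_card_filter_flagEdge hιB hιinv hιne hx
  simp only [Nat.card_coe_set_eq] at hV
  omega

theorem isTree_flagGraph [Finite V] (hιB : ∀ x ∈ B, ι x ∈ B) (hιinv : ∀ x ∈ B, ι (ι x) = x)
    (hιne : ∀ x ∈ B, ι x ≠ x) (hconn : (flagGraph π B ι).Connected)
    (hcard : #B + 2 = 2 * Nat.card V) : (flagGraph π B ι).IsTree := by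
  have := flagGraph_card_eq hιB hιinv hιne hconn hcard
  refine SimpleGraph.isTree_iff_connected_and_card.mpr ⟨hconn, ?_⟩
  simp only [Nat.card_coe_set_eq]
  omega

theorem edgeSet_flagGraph_eq (hιB : ∀ x ∈ B, ι x ∈ B) (hιinv : ∀ x ∈ B, ι (ι x) = x)
    (hιne : ∀ x ∈ B, ι x ≠ x) (hconn : (flagGraph π B ι).Connected)
    (hcard : #B + 2 = 2 * Nat.card V) :
    (flagGraph π B ι).edgeSet = ↑(B.image (flagEdge π ι)) :=
  Set.eq_of_subset_of_ncard_le edgeSet_flagGraph_subset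
    (by rw [Set.ncard_coe_finset, (flagGraph_card_eq hιB hιinv hιne hconn hcard).1])

theorem eq_or_eq_of_flagEdge_eq (hιB : ∀ x ∈ B, ι x ∈ B) (hιinv : ∀ x ∈ B, ι (ι x) = x)
    (hιne : ∀ x ∈ B, ι x ≠ x) (hconn : (flagGraph π B ι).Connected)
    (hcard : #B + 2 = 2 * Nat.card V) {x y : F} (hx : x ∈ B) (hy : y ∈ B)
    (hxy : flagEdge π ι y = flagEdge π ι x) : y = x ∨ y = ι x := by
  classical
  have hfiber : #{z ∈ B | flagEdge π ι z = flagEdge π ι x} = 2 :=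
    card_filter_eq_of_card_le_mul_card_image
      (by simpa using fun z hz => two_le_card_filter_flagEdge hιB hιinv hιne hz)
      (flagGraph_card_eq hιB hιinv hιne hconn hcard).2.le (mem_image_of_mem _ hx)
  have hpair : {x, ι x} = ({z ∈ B | flagEdge π ι z = flagEdge π ι x} : Finset F) :=
    eq_of_subset_of_card_le
      (by simp [insert_subset_iff, hx, hιB x hx, flagEdge_involution hιinv hx])
      (by rw [hfiber, card_pair (hιne x hx).symm])
  simpa using hpair.symm.subset (mem_filter.mpr ⟨hy, hxy⟩)

theorem not_reachable_deleteEdges_flagEdge [Finite V] (hιB : ∀ x ∈ B, ι x ∈ B)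
    (hιinv : ∀ x ∈ B, ι (ι x) = x) (hιne : ∀ x ∈ B, ι x ≠ x)
    (hconn : (flagGraph π B ι).Connected) (hcard : #B + 2 = 2 * Nat.card V) {x : F}
    (hx : x ∈ B) :
    ¬ ((flagGraph π B ι).deleteEdges {flagEdge π ι x}).Reachable (π x) (π (ι x)) := by
  refine SimpleGraph.isAcyclic_iff_forall_isBridge.mp
    (isTree_flagGraph hιB hιinv hιne hconn hcard).isAcyclic (e := flagEdge π ι x) ?_
  rw [edgeSet_flagGraph_eq hιB hιinv hιne hconn hcard]
  exact mem_image_of_mem _ hx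

theorem eq_of_reachable_deleteEdges_flagEdge (hιB : ∀ x ∈ B, ι x ∈ B)
    (hιinv : ∀ x ∈ B, ι (ι x) = x) (hιne : ∀ x ∈ B, ι x ≠ x)
    (hconn : (flagGraph π B ι).Connected) (hcard : #B + 2 = 2 * Nat.card V) {x y : F}
    (hx : x ∈ B) (hy : y ∈ B)
    (hyS : ((flagGraph π B ι).deleteEdges {flagEdge π ι x}).Reachable (π x) (π y))
    (hιyS : ¬ ((flagGraph π B ι).deleteEdges {flagEdge π ι x}).Reachable (π x) (π (ι y))) :
    y = x := by
  have hadj : (flagGraph π B ι).Adj (π y) (π (ι y)) := by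
    change flagEdge π ι y ∈ (flagGraph π B ι).edgeSet
    rw [edgeSet_flagGraph_eq hιB hιinv hιne hconn hcard]
    exact mem_image_of_mem _ hy
  obtain rfl | rfl := eq_or_eq_of_flagEdge_eq hιB hιinv hιne hconn hcard hx hy
    (SimpleGraph.eq_of_adj_of_reachable_deleteEdges hadj hyS hιyS)
  · rfl
  · rw [hιinv x hx] at hιyS
    exact absurd (SimpleGraph.Reachable.refl _) hιyS

theorem sum_filter_crossing_eq_zero [Fintype F] {R M : Type} [CommRing R] [AddCommGroup M]
    [Module R M] {f : F → M} (hf : f ∈ compatibleNumberings R π B ι M)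
    (hιB : ∀ x ∈ B, ι x ∈ B) (hιinv : ∀ x ∈ B, ι (ι x) = x) (hιne : ∀ x ∈ B, ι x ≠ x)
    (S : Finset V) : ∑ x ∈ B with π x ∈ S ∧ π (ι x) ∉ S, f x = 0 := by
  obtain ⟨hunbdd, hvert, hedge⟩ := hf
  have hinside : ∑ x ∈ B with π x ∈ S, f x = 0 := by
    have hB : ∑ x ∈ B with π x ∈ S, f x = ∑ x with π x ∈ S, f x :=
      sum_subset (filter_subset_filter _ (subset_univ B)) fun x hx hxB =>
        hunbdd x fun h => hxB (mem_filter.mpr ⟨h, (mem_filter.mp hx).2⟩)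
    rw [hB, ← sum_fiberwise_eq_sum_filter]
    exact sum_eq_zero fun v _ => hvert v
  have hinternal : ∑ x ∈ B with π x ∈ S ∧ π (ι x) ∈ S, f x = 0 := by
    refine sum_involution (fun x _ => ι x) (fun x hx => hedge x (mem_filter.mp hx).1)
      (fun x hx _ => hιne x (mem_filter.mp hx).1) (fun x hx => ?_)
      (fun x hx => hιinv x (mem_filter.mp hx).1)
    obtain ⟨hxB, hxS, hιxS⟩ := mem_filter.mp hx
    exact mem_filter.mpr ⟨hιB x hxB, hιxS, by rwa [hιinv x hxB]⟩
  rwa [← sum_filter_add_sum_filter_not _ (fun x => π (ι x) ∈ S), filter_filter, filter_filter,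
    hinternal, zero_add] at hinside

end FlagGraph

theorem compatibleNumberings_eq_zero_of_tree_general
    {V F : Type} [Fintype V] [Fintype F] [DecidableEq V]
    (π : F → V) (B : Finset F) (ι : F → F)
    (hιB : ∀ x ∈ B, ι x ∈ B)
    (hιinv : ∀ x ∈ B, ι (ι x) = x)
    (hιne : ∀ x ∈ B, ι x ≠ x)
    (hconn : (flagGraph π B ι).Connected)
    (hbetti : B.card + 2 = 2 * Fintype.card V + 2 * 0) :
    ∀ (M : Type) [AddCommGroup M] [Module ℂ M],
      ∀ f ∈ compatibleNumberings ℂ π B ι M, f = 0 := by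
  classical
  intro M _ _ f hf
  have hcard : #B + 2 = 2 * Nat.card V := by simpa [Nat.card_eq_fintype_card] using hbetti
  funext x
  by_cases hx : x ∈ B
  swap
  · exact hf.1 x hx
  set S : Finset V := {u | ((flagGraph π B ι).deleteEdges {flagEdge π ι x}).Reachable (π x) u}
  have hcut : {y ∈ B | π y ∈ S ∧ π (ι y) ∉ S} = {x} := by
    ext y
    simp only [S, mem_filter, mem_univ, true_and, mem_singleton]
    constructor
    · rintro ⟨hy, hyS, hιyS⟩
      exact eq_of_reachable_deleteEdges_flagEdge hιB hιinv hιne hconn hcard hx hy hyS hιyS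
    · rintro rfl
      exact ⟨hx, .refl _, not_reachable_deleteEdges_flagEdge hιB hιinv hιne hconn hcard hx⟩
  simpa [hcut] using sum_filter_crossing_eq_zero hf hιB hιinv hιne S

/-- For a nonempty finite connected trivalent flag graph `Γ` of first Betti number `0`
(i.e. whose underlying graph is a tree), the only compatible numbering of `Γ` with values
in any `ℂ`-vector space is the zero function. -/
theorem compatibleNumberings_eq_zero_of_tree
    {V F : Type} [Fintype V] [Fintype F] [DecidableEq V] [DecidableEq F] [Nonempty V]
    (π : F → V) (B : Finset F) (ι : F → F)
    (htri : ∀ v : V, (Finset.univ.filter (fun x => π x = v)).card = 3)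
    (hιB : ∀ x ∈ B, ι x ∈ B)
    (hιinv : ∀ x ∈ B, ι (ι x) = x)
    (hιne : ∀ x ∈ B, ι x ≠ x)
    (hconn : (flagGraph π B ι).Connected)
    (hbetti : B.card + 2 = 2 * Fintype.card V + 2 * 0) :
    ∀ (M : Type) [AddCommGroup M] [Module ℂ M],
      ∀ f ∈ compatibleNumberings ℂ π B ι M, f = 0 :=
  compatibleNumberings_eq_zero_of_tree_general π B ι hιB hιinv hιne hconn hbetti
end

section
/- Let Γ = (V, F, π, B, ι) be a nonempty finite connected trivalent flag graph, and let x₀ ∈ B be a bounded flag such that the flag graph Γ' = (V, F, π, B \ {x₀, ι x₀}, ι restricted) obtained by deleting the bounded edge {x₀, ι x₀} (so that x₀ and ι x₀ become unbounded flags) is still connected (equivalently, the edge {x₀, ι x₀} lies on a cycle of Γ). Then the dimension of the space of compatible numberings of Γ with values in ℂ equals the dimension of the space of compatible numberings of Γ' with values in ℂ plus 1. (Note that the first Betti number of Γ' is one less than that of Γ.) -/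
open Finset

/-!
Evaluation at `x₀` is a linear functional on the compatible numberings of `Γ` whose kernel is
the space of compatible numberings of `Γ'`, so it suffices to show that it does not vanish.
As `Γ'` is connected, some path of `Γ'` leads from `π (ι x₀)` back to `π x₀`; the unit flow
along it plus the unit flow through the cut edge is a compatible numbering of `Γ` with value
`1` at `x₀`.
-/

theorem Submodule.finrank_eq_finrank_inf_ker_add_one {K V : Type*} [Field K] [AddCommGroup V]
    [Module K V] (S : Submodule K V) [FiniteDimensional K S] (φ : Module.Dual K V)
    (h : ∃ v ∈ S, φ v ≠ 0) :
    Module.finrank K S = Module.finrank K ↥(S ⊓ LinearMap.ker φ) + 1 := by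
  obtain ⟨v, hv, hφv⟩ := h
  have hne : φ.domRestrict S ≠ 0 := fun h0 => hφv (LinearMap.congr_fun h0 ⟨v, hv⟩)
  rw [← Module.Dual.finrank_ker_add_one_of_ne_zero hne, LinearMap.ker_domRestrict,
    ← Submodule.map_comap_subtype, Submodule.finrank_map_subtype_eq]

variable {V F : Type}

section EdgeChains

variable (R : Type) [CommRing R] (B : Finset F) (ι : F → F) (M : Type) [AddCommGroup M]
  [Module R M]

def edgeChains : Submodule R (F → M) where
  carrier := {f | (∀ x, x ∉ B → f x = 0) ∧ ∀ x ∈ B, f x + f (ι x) = 0}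
  add_mem' := by
    rintro f g ⟨hf, hf'⟩ ⟨hg, hg'⟩
    refine ⟨fun x hx => by simp [hf x hx, hg x hx], fun x hx => ?_⟩
    rw [Pi.add_apply, Pi.add_apply, add_add_add_comm, hf' x hx, hg' x hx, add_zero]
  zero_mem' := ⟨fun _ _ => rfl, fun _ _ => add_zero 0⟩
  smul_mem' := by
    rintro c f ⟨hf, hf'⟩
    refine ⟨fun x hx => by simp [hf x hx], fun x hx => ?_⟩
    rw [Pi.smul_apply, Pi.smul_apply, ← smul_add, hf' x hx, smul_zero]

variable {R B ι M} [DecidableEq F] (hιinv : ∀ x ∈ B, ι (ι x) = x) {x₀ : F} (hx₀ : x₀ ∈ B)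
include hιinv hx₀

theorem mem_edgeChains_sdiff_pair {f : F → M} :
    f ∈ edgeChains R (B \ {x₀, ι x₀}) ι M ↔ f ∈ edgeChains R B ι M ∧ f x₀ = 0 := by
  have hcut : ∀ x, x ∉ B \ {x₀, ι x₀} ↔ x ∉ B ∨ x = x₀ ∨ x = ι x₀ := by
    intro x; simp only [mem_sdiff, mem_insert, mem_singleton]; tauto
  constructor
  · rintro ⟨hsupp, hodd⟩
    have hfx₀ : f x₀ = 0 := hsupp x₀ ((hcut x₀).2 (.inr (.inl rfl)))
    have hfιx₀ : f (ι x₀) = 0 := hsupp _ ((hcut _).2 (.inr (.inr rfl)))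
    refine ⟨⟨fun x hx => hsupp x ((hcut x).2 (.inl hx)), fun x hx => ?_⟩, hfx₀⟩
    by_cases hx' : x ∈ B \ {x₀, ι x₀}
    · exact hodd x hx'
    · rcases ((hcut x).1 hx').resolve_left (not_not.2 hx) with rfl | rfl
      · rw [hfx₀, hfιx₀, add_zero]
      · rw [hιinv x₀ hx₀, hfx₀, hfιx₀, add_zero]
  · rintro ⟨⟨hsupp, hodd⟩, hfx₀⟩
    have hfιx₀ : f (ι x₀) = 0 := by simpa [hfx₀] using hodd x₀ hx₀
    refine ⟨fun x hx => ?_, fun x hx => hodd x (mem_sdiff.1 hx).1⟩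
    rcases (hcut x).1 hx with hx | rfl | rfl
    exacts [hsupp x hx, hfx₀, hfιx₀]

theorem apply_mem_sdiff_pair (hιB : ∀ x ∈ B, ι x ∈ B) {x : F} (hx : x ∈ B \ {x₀, ι x₀}) :
    ι x ∈ B \ {x₀, ι x₀} := by
  simp only [mem_sdiff, mem_insert, mem_singleton, not_or] at hx ⊢
  obtain ⟨hxB, hne, hne'⟩ := hx
  refine ⟨hιB x hxB, fun h => hne' ?_, fun h => hne ?_⟩
  · rw [← hιinv x hxB, h]
  · rw [← hιinv x hxB, h, hιinv x₀ hx₀]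

end EdgeChains

section VertexSum

variable [Fintype F] [DecidableEq V] {π : F → V}

variable (π) in
def vertexSum {M : Type} [AddCommMonoid M] : (F → M) →+ (V → M) where
  toFun f v := ∑ x ∈ univ.filter (fun y => π y = v), f x
  map_zero' := by ext; simp
  map_add' f g := by ext; simp [sum_add_distrib]

theorem vertexSum_single [DecidableEq F] {M : Type} [AddCommMonoid M] (x : F) (m : M) :
    vertexSum π (Pi.single x m) = Pi.single (π x) m := by
  ext v
  simp [vertexSum, Pi.single_apply, eq_comm]

variable {R : Type} [CommRing R] {B : Finset F} {ι : F → F} {M : Type} [AddCommGroup M]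
  [Module R M]

theorem mem_compatibleNumberings_iff {f : F → M} :
    f ∈ compatibleNumberings R π B ι M ↔ f ∈ edgeChains R B ι M ∧ vertexSum π f = 0 :=
  ⟨fun ⟨hsupp, hsum, hodd⟩ => ⟨⟨hsupp, hodd⟩, funext hsum⟩,
    fun ⟨⟨hsupp, hodd⟩, hsum⟩ => ⟨hsupp, congrFun hsum, hodd⟩⟩

theorem compatibleNumberings_sdiff_pair [DecidableEq F] {x₀ : F} (hx₀ : x₀ ∈ B)
    (hιinv : ∀ x ∈ B, ι (ι x) = x) :
    compatibleNumberings R π (B \ {x₀, ι x₀}) ι M =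
      compatibleNumberings R π B ι M ⊓ LinearMap.ker (LinearMap.proj x₀) := by
  ext f
  simp only [Submodule.mem_inf, LinearMap.mem_ker, LinearMap.proj_apply,
    mem_compatibleNumberings_iff, mem_edgeChains_sdiff_pair hιinv hx₀]
  tauto

end VertexSum

section UnitFlow

variable [DecidableEq F] (R : Type) [CommRing R] {B : Finset F} (ι : F → F)

def unitFlow (y : F) : F → R := Pi.single y 1 - Pi.single (ι y) 1

variable {R ι}

theorem vertexSum_unitFlow [Fintype F] [DecidableEq V] {π : F → V} (y : F) :
    vertexSum π (unitFlow R ι y) = Pi.single (π y) 1 - Pi.single (π (ι y)) 1 := by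
  rw [unitFlow, map_sub, vertexSum_single, vertexSum_single]

theorem unitFlow_mem_edgeChains (hιB : ∀ x ∈ B, ι x ∈ B) (hιinv : ∀ x ∈ B, ι (ι x) = x)
    {y : F} (hy : y ∈ B) : unitFlow R ι y ∈ edgeChains R B ι R := by
  refine ⟨fun x hx => ?_, fun x hx => ?_⟩
  · have h1 : x ≠ y := by rintro rfl; exact hx hy
    have h2 : x ≠ ι y := by rintro rfl; exact hx (hιB y hy)
    simp [unitFlow, h1, h2]
  · have h1 : ι x = ι y ↔ x = y :=
      ⟨fun h => by rw [← hιinv x hx, h, hιinv y hy], congrArg ι⟩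
    have h2 : ι x = y ↔ x = ι y :=
      ⟨fun h => by rw [← h, hιinv x hx], fun h => by rw [h, hιinv y hy]⟩
    simp only [unitFlow, Pi.sub_apply, Pi.single_apply, h1, h2]
    ring

theorem unitFlow_apply_self {y : F} (hy : ι y ≠ y) : unitFlow R ι y y = 1 := by
  simp [unitFlow, hy.symm]

end UnitFlow

section Flows

variable {π : F → V} {B : Finset F} {ι : F → F} (hιB : ∀ x ∈ B, ι x ∈ B)
  (hιinv : ∀ x ∈ B, ι (ι x) = x)
include hιB hιinv

theorem exists_of_flagGraph_adj {u v : V} (h : (flagGraph π B ι).Adj u v) :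
    ∃ y ∈ B, π y = u ∧ π (ι y) = v := by
  obtain ⟨-, ⟨y, hy, hyu, hyv⟩ | ⟨y, hy, hyv, hyu⟩⟩ := SimpleGraph.fromRel_adj _ _ _ |>.1 h
  · exact ⟨y, hy, hyu, hyv⟩
  · exact ⟨ι y, hιB y hy, hyu, by rw [hιinv y hy, hyv]⟩

variable [Fintype F] [DecidableEq V] [DecidableEq F] {R : Type} [CommRing R]

theorem exists_mem_edgeChains_vertexSum_eq_of_walk {u w : V} (p : (flagGraph π B ι).Walk u w) :
    ∃ f ∈ edgeChains R B ι R, vertexSum π f = Pi.single u 1 - Pi.single w 1 := by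
  induction p with
  | nil => exact ⟨0, zero_mem _, by simp⟩
  | cons h _ ih =>
    obtain ⟨f, hf, hsum⟩ := ih
    obtain ⟨y, hy, hyu, hyv⟩ := exists_of_flagGraph_adj hιB hιinv h
    refine ⟨unitFlow R ι y + f, add_mem (unitFlow_mem_edgeChains hιB hιinv hy) hf, ?_⟩
    rw [map_add, vertexSum_unitFlow, hsum, hyu, hyv, sub_add_sub_cancel]

theorem exists_mem_compatibleNumberings_apply_eq_one {x₀ : F} (hx₀ : x₀ ∈ B) (hιx₀ : ι x₀ ≠ x₀)
    (hconn' : (flagGraph π (B \ {x₀, ι x₀}) ι).Connected) :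
    ∃ f ∈ compatibleNumberings R π B ι R, f x₀ = 1 := by
  obtain ⟨f, hf, hsum⟩ := exists_mem_edgeChains_vertexSum_eq_of_walk (R := R)
    (fun _ => apply_mem_sdiff_pair hιinv hx₀ hιB) (fun x hx => hιinv x (mem_sdiff.1 hx).1)
    (hconn'.preconnected (π (ι x₀)) (π x₀)).some
  obtain ⟨hfB, hfx₀⟩ := (mem_edgeChains_sdiff_pair hιinv hx₀).1 hf
  refine ⟨f + unitFlow R ι x₀, mem_compatibleNumberings_iff.2
    ⟨add_mem hfB (unitFlow_mem_edgeChains hιB hιinv hx₀), ?_⟩, ?_⟩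
  · rw [map_add, hsum, vertexSum_unitFlow, sub_add_sub_cancel, sub_self]
  · rw [Pi.add_apply, hfx₀, unitFlow_apply_self hιx₀, zero_add]

end Flows

theorem dim_compatibleNumberings_cut_cycle_edge_general
    {V F : Type} [Fintype F] [DecidableEq V] [DecidableEq F]
    (π : F → V) (B : Finset F) (ι : F → F)
    (hιB : ∀ x ∈ B, ι x ∈ B)
    (hιinv : ∀ x ∈ B, ι (ι x) = x)
    (hιne : ∀ x ∈ B, ι x ≠ x)
    (x₀ : F) (hx₀ : x₀ ∈ B)
    (hconn' : (flagGraph π (B \ {x₀, ι x₀}) ι).Connected) :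
    Module.finrank ℂ ↥(compatibleNumberings ℂ π B ι ℂ) =
      Module.finrank ℂ ↥(compatibleNumberings ℂ π (B \ {x₀, ι x₀}) ι ℂ) + 1 := by
  obtain ⟨f, hf, hfx₀⟩ :=
    exists_mem_compatibleNumberings_apply_eq_one (R := ℂ) hιB hιinv hx₀ (hιne x₀ hx₀) hconn'
  rw [compatibleNumberings_sdiff_pair hx₀ hιinv]
  exact Submodule.finrank_eq_finrank_inf_ker_add_one _
    (LinearMap.proj x₀ : Module.Dual ℂ (F → ℂ)) ⟨f, hf, by simp [hfx₀]⟩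

/-- Cutting a cycle edge: if `Γ` is a nonempty finite connected trivalent flag graph and
`x₀` is a bounded flag such that deleting the bounded edge `{x₀, ι x₀}` (turning its two
flags into unbounded ones) leaves the underlying graph connected, then the dimension of
the space of compatible numberings of `Γ` with values in `ℂ` equals that of the cut graph
`Γ'` plus `1`. -/
theorem dim_compatibleNumberings_cut_cycle_edge
    {V F : Type} [Fintype V] [Fintype F] [DecidableEq V] [DecidableEq F] [Nonempty V]
    (π : F → V) (B : Finset F) (ι : F → F)
    (htri : ∀ v : V, (Finset.univ.filter (fun x => π x = v)).card = 3)
    (hιB : ∀ x ∈ B, ι x ∈ B)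
    (hιinv : ∀ x ∈ B, ι (ι x) = x)
    (hιne : ∀ x ∈ B, ι x ≠ x)
    (hconn : (flagGraph π B ι).Connected)
    (x₀ : F) (hx₀ : x₀ ∈ B)
    (hconn' : (flagGraph π (B \ {x₀, ι x₀}) ι).Connected) :
    Module.finrank ℂ ↥(compatibleNumberings ℂ π B ι ℂ) =
      Module.finrank ℂ ↥(compatibleNumberings ℂ π (B \ {x₀, ι x₀}) ι ℂ) + 1 :=
  dim_compatibleNumberings_cut_cycle_edge_general π B ι hιB hιinv hιne x₀ hx₀ hconn'
end

section
/- Let n ≥ 1, let Γ be a nonempty finite connected trivalent flag graph with first Betti number 1, and let d : B → ℝⁿ \ {0} be a direction assignment, i.e., d(ι x) = −d(x) for all x ∈ B. Let S be the ℂ-vector space of compatible numberings f of Γ with values in the dual space (ℂⁿ)* that in addition satisfy f(x)(d(x)) = 0 for every bounded flag x. Then dim_ℂ S = n − dim_ℝ span_ℝ{ d(x) : x a bounded flag whose edge is a cycle edge }, i.e., S is isomorphic to the annihilator of the real span of the directions of the cycle edges. -/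
open Finset

/-- The submodule of functions `f : F → (ℂⁿ)*` satisfying the extra linear condition
`f x (d x) = 0` for every bounded flag `x`, where `d x ∈ ℝⁿ ⊆ ℂⁿ`. -/
noncomputable def evalConditions {F : Type} (B : Finset F) (n : ℕ) (d : F → (Fin n → ℝ)) :
    Submodule ℂ (F → Module.Dual ℂ (Fin n → ℂ)) where
  carrier := {f | ∀ x ∈ B, f x (fun i => (d x i : ℂ)) = 0}
  add_mem' := by
    intro f g hf hg x hx
    simp [hf x hx, hg x hx]
  zero_mem' := by intro x hx; simp
  smul_mem' := by
    intro c f hf x hx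
    simp [Pi.smul_apply, hf x hx]

/-! The hypotheses say that the flag graph has as many bounded edges as vertices, so its scalar
cycle space is one-dimensional: a dimension count yields a nonzero compatible numbering `ε`.
A numbering vanishing on a cycle edge `x` vanishes identically, since removing `x` leaves a
tree, every edge of a tree is a bridge, and a numbering vanishes on a bridge because the total
flow across a cut is zero. Hence the cycle edges are exactly the support of `ε`, and every
`(ℂⁿ)*`-valued compatible numbering is `z ↦ ε z • ξ` for a unique `ξ ∈ (ℂⁿ)*`. The conditions
`f x (d x) = 0` then say that `ξ` annihilates the directions of the cycle edges, and their complex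
span has the same dimension as their real span. -/

open Module

theorem finrank_span_image_algebraMap_comp {K L ι' : Type} [Field K] [Field L] [Algebra K L]
    [Finite ι'] (s : Set (ι' → K)) :
    finrank L (Submodule.span L ((fun v => algebraMap K L ∘ v) '' s)) =
      finrank K (Submodule.span K s) := by
  obtain ⟨t, hts, hspan, hli⟩ := exists_linearIndependent K s
  have : Fintype t := hli.setFinite.fintype
  let φ : (ι' → K) →ₗ[K] (ι' → L) := (Algebra.linearMap K L).compLeft ι'
  have hspanL : Submodule.span L ((fun v => algebraMap K L ∘ v) '' s) =
      Submodule.span L (Set.range fun v : t => algebraMap K L ∘ (v : ι' → K)) := by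
    rw [Set.range_comp' (fun v => algebraMap K L ∘ v), Subtype.range_coe]
    refine le_antisymm (Submodule.span_le.2 ?_) (Submodule.span_mono (Set.image_mono hts))
    rintro _ ⟨v, hv, rfl⟩
    have hφv : φ v ∈ Submodule.span K (φ '' t) := by
      rw [Submodule.span_image, hspan]
      exact Submodule.mem_map_of_mem (Submodule.subset_span hv)
    exact Submodule.span_le_restrictScalars K L _ hφv
  rw [hspanL, finrank_span_eq_card (linearIndependent_algebraMap_comp_iff.2 hli), ← hspan,
    ← finrank_span_eq_card hli, Subtype.range_coe]

section FlagGraphs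

variable {V F : Type}

structure IsFreeInvolutionOn (ι : F → F) (B : Finset F) : Prop where
  mapsTo : ∀ x ∈ B, ι x ∈ B
  involutive : ∀ x ∈ B, ι (ι x) = x
  ne : ∀ x ∈ B, ι x ≠ x

structure IsOrientation (ι : F → F) (B O : Finset F) : Prop where
  subset : O ⊆ B
  mem_iff : ∀ z ∈ B, z ∈ O ↔ ι z ∉ O

def IsCycleFlag [DecidableEq F] (π : F → V) (B : Finset F) (ι : F → F) (x : F) : Prop :=
  (flagGraph π (B \ {x, ι x}) ι).Reachable (π x) (π (ι x))

namespace IsFreeInvolutionOn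

variable {ι : F → F} {B : Finset F}

theorem sdiff_pair [DecidableEq F] (hB : IsFreeInvolutionOn ι B) {x : F} (hx : x ∈ B) :
    IsFreeInvolutionOn ι (B \ {x, ι x}) where
  mapsTo z hz := by
    simp only [mem_sdiff, mem_insert, mem_singleton, not_or] at hz ⊢
    obtain ⟨hzB, hzx, hzιx⟩ := hz
    refine ⟨hB.mapsTo z hzB, fun h => hzιx ?_, fun h => hzx ?_⟩
    · rw [← hB.involutive z hzB, h]
    · rw [← hB.involutive z hzB, h, hB.involutive x hx]
  involutive z hz := hB.involutive z (mem_sdiff.1 hz).1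
  ne z hz := hB.ne z (mem_sdiff.1 hz).1

theorem card_sdiff_pair_add_two [DecidableEq F] (hB : IsFreeInvolutionOn ι B) {x : F}
    (hx : x ∈ B) : #(B \ {x, ι x}) + 2 = #B := by
  have hsub : {x, ι x} ⊆ B := insert_subset hx (singleton_subset_iff.2 (hB.mapsTo x hx))
  have hpair : #{x, ι x} = 2 := card_pair (hB.ne x hx).symm
  have := card_le_card hsub
  rw [card_sdiff_of_subset hsub]
  omega

theorem exists_isOrientation (hB : IsFreeInvolutionOn ι B) : ∃ O, IsOrientation ι B O := by
  classical
  let : LinearOrder F := IsWellOrder.linearOrder WellOrderingRel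
  refine ⟨B.filter fun z => z < ι z, filter_subset _ _, fun z hz => ?_⟩
  simp only [mem_filter, hz, hB.mapsTo z hz, hB.involutive z hz, true_and, not_lt]
  exact ⟨le_of_lt, fun h => lt_of_le_of_ne h (hB.ne z hz).symm⟩

theorem two_mul_card_isOrientation (hB : IsFreeInvolutionOn ι B) {O : Finset F}
    (hO : IsOrientation ι B O) : 2 * #O = #B := by
  classical
  have hunion : B = O ∪ O.image ι := by
    ext z
    simp only [mem_union, mem_image]
    constructor
    · intro hz
      by_cases hzO : z ∈ O
      · exact Or.inl hzO
      · refine Or.inr ⟨ι z, by simpa [hzO] using hO.mem_iff z hz, hB.involutive z hz⟩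
    · rintro (hz | ⟨o, ho, rfl⟩)
      · exact hO.subset hz
      · exact hB.mapsTo o (hO.subset ho)
  have hdisj : Disjoint O (O.image ι) := by
    refine disjoint_left.2 fun z hzO hzι => ?_
    obtain ⟨o, ho, rfl⟩ := mem_image.1 hzι
    exact (hO.mem_iff o (hO.subset ho)).1 ho hzO
  have hinj : Set.InjOn ι O := fun a ha b hb hab => by
    rw [← hB.involutive a (hO.subset ha), hab, hB.involutive b (hO.subset hb)]
  rw [hunion, card_union_of_disjoint hdisj, card_image_of_injOn hinj]
  ring

end IsFreeInvolutionOn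

section Graph

variable {π : F → V} {ι : F → F} {B : Finset F}

theorem flagGraph_reachable_of_mem {x : F} (hx : x ∈ B) :
    (flagGraph π B ι).Reachable (π x) (π (ι x)) := by
  by_cases h : π x = π (ι x)
  · rw [h]
  · exact SimpleGraph.Adj.reachable ⟨h, Or.inl ⟨x, hx, rfl, rfl⟩⟩

theorem flagGraph_reachable_le {r : V → V → Prop} (hr : Equivalence r)
    (h : ∀ x ∈ B, r (π x) (π (ι x))) {v w : V} (hvw : (flagGraph π B ι).Reachable v w) :
    r v w := by
  rw [SimpleGraph.reachable_iff_reflTransGen] at hvw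
  induction hvw with
  | refl => exact hr.refl _
  | tail _ hadj ih =>
    obtain ⟨-, ⟨x, hx, rfl, rfl⟩ | ⟨x, hx, rfl, rfl⟩⟩ := hadj
    · exact hr.trans ih (h x hx)
    · exact hr.trans ih (hr.symm (h x hx))

theorem IsCycleFlag.preconnected_sdiff_pair [DecidableEq F] (hB : IsFreeInvolutionOn ι B)
    {x : F} (hx : x ∈ B) (hcyc : IsCycleFlag π B ι x)
    (hconn : (flagGraph π B ι).Preconnected) :
    (flagGraph π (B \ {x, ι x}) ι).Preconnected := by
  refine fun v w => flagGraph_reachable_le (SimpleGraph.reachable_is_equivalence _)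
    (fun z hz => ?_) (hconn v w)
  by_cases hzx : z = x
  · exact hzx ▸ hcyc
  by_cases hzιx : z = ι x
  · rw [hzιx, hB.involutive x hx]
    exact hcyc.symm
  · exact flagGraph_reachable_of_mem (by simp [hz, hzx, hzιx])

end Graph

section Flows

variable {π : F → V} {ι : F → F} {B : Finset F} [Fintype F] [DecidableEq V]
  {R M : Type} [CommRing R] [AddCommGroup M] [Module R M]

theorem sum_filter_cut_eq_zero (hB : IsFreeInvolutionOn ι B) {f : F → M}
    (hf : f ∈ compatibleNumberings R π B ι M) (K : Finset V) :
    ∑ z ∈ B with π z ∈ K ∧ π (ι z) ∉ K, f z = 0 := by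
  obtain ⟨hout, hvert, hanti⟩ := hf
  have hK : ∑ z ∈ B with π z ∈ K, f z = 0 :=
    calc ∑ z ∈ B with π z ∈ K, f z = ∑ z with π z ∈ K, f z :=
          sum_subset (filter_subset_filter _ (subset_univ B))
            fun z hz' hz => hout z fun hzB => hz (mem_filter.2 ⟨hzB, (mem_filter.1 hz').2⟩)
      _ = ∑ v ∈ K, ∑ z with π z = v, f z := (sum_fiberwise_eq_sum_filter _ _ _ _).symm
      _ = 0 := sum_eq_zero fun v _ => hvert v
  -- flags with both ends in `K` cancel in pairs `{z, ι z}`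
  have hinner : ∑ z ∈ B with π z ∈ K ∧ π (ι z) ∈ K, f z = 0 := by
    refine sum_involution (fun z _ => ι z) (fun z hz => hanti z (mem_filter.1 hz).1)
      (fun z hz _ => hB.ne z (mem_filter.1 hz).1) (fun z hz => ?_)
      (fun z hz => hB.involutive z (mem_filter.1 hz).1)
    obtain ⟨hzB, hzK, hιzK⟩ := mem_filter.1 hz
    exact mem_filter.2 ⟨hB.mapsTo z hzB, hιzK, by rwa [hB.involutive z hzB]⟩
  rw [← filter_filter] at hinner ⊢
  rwa [← sum_filter_add_sum_filter_not _ (fun z => π (ι z) ∈ K), hinner, zero_add] at hK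

theorem apply_eq_zero_of_not_isCycleFlag [Fintype V] [DecidableEq F]
    (hB : IsFreeInvolutionOn ι B) {f : F → M} (hf : f ∈ compatibleNumberings R π B ι M)
    {x : F} (hx : x ∈ B) (hbridge : ¬ IsCycleFlag π B ι x) : f x = 0 := by
  classical
  set G := flagGraph π (B \ {x, ι x}) ι
  set K : Finset V := {v | G.Reachable (π x) v}
  -- `x` is the only flag leaving the component `K` of `π x` in `G`
  have hcut : {z ∈ B | π z ∈ K ∧ π (ι z) ∉ K} = {x} := by
    ext z
    simp only [K, mem_filter, mem_univ, true_and, mem_singleton]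
    constructor
    · rintro ⟨hzB, hzK, hιzK⟩
      by_contra hzx
      have hzιx : z ≠ ι x := by
        rintro rfl
        exact hbridge hzK
      exact hιzK (hzK.trans (flagGraph_reachable_of_mem (by simp [hzB, hzx, hzιx])))
    · rintro rfl
      exact ⟨hx, .refl _, hbridge⟩
  simpa [hcut] using sum_filter_cut_eq_zero hB hf K

theorem smul_mem_compatibleNumberings {ε : F → R} (hε : ε ∈ compatibleNumberings R π B ι R)
    (ξ : M) : (fun z => ε z • ξ) ∈ compatibleNumberings R π B ι M := by
  obtain ⟨hout, hvert, hanti⟩ := hε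
  refine ⟨fun z hz => by simp [hout z hz], fun v => ?_, fun z hz => ?_⟩
  · rw [← sum_smul, hvert v, zero_smul]
  · rw [← add_smul, hanti z hz, zero_smul]

theorem mem_compatibleNumberings_sdiff_pair [DecidableEq F] {f : F → M}
    (hf : f ∈ compatibleNumberings R π B ι M) {x : F} (hx : x ∈ B) (hfx : f x = 0) :
    f ∈ compatibleNumberings R π (B \ {x, ι x}) ι M := by
  obtain ⟨hout, hvert, hanti⟩ := hf
  refine ⟨fun z hz => ?_, hvert, fun z hz => hanti z (mem_sdiff.1 hz).1⟩
  by_cases hzB : z ∈ B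
  · obtain rfl | rfl : z = x ∨ z = ι x := by
      rw [mem_sdiff, mem_insert, mem_singleton] at hz
      tauto
    · exact hfx
    · simpa [hfx] using hanti x hx
  · exact hout z hzB

end Flows

namespace IsFreeInvolutionOn

variable {π : F → V} {ι : F → F} {B : Finset F} [Fintype V]

theorem two_mul_card_le_card_add_two (hB : IsFreeInvolutionOn ι B)
    (hconn : (flagGraph π B ι).Preconnected) : 2 * Fintype.card V ≤ #B + 2 := by
  obtain ⟨O, hO⟩ := hB.exists_isOrientation
  let δ : (V → ℚ) →ₗ[ℚ] (O → ℚ) := LinearMap.pi fun o =>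
    LinearMap.proj (R := ℚ) (φ := fun _ => ℚ) (π o) - LinearMap.proj (π (ι o))
  have hker : LinearMap.ker δ ≤ Submodule.span ℚ {1} := by
    intro h hh
    have hedge : ∀ z ∈ B, h (π z) = h (π (ι z)) := by
      intro z hz
      by_cases hzO : z ∈ O
      · simpa [δ, sub_eq_zero] using congrFun hh ⟨z, hzO⟩
      · have hιzO : ι z ∈ O := by simpa [hzO] using hO.mem_iff z hz
        simpa [δ, sub_eq_zero, hB.involutive z hz, eq_comm] using congrFun hh ⟨ι z, hιzO⟩
    have hconst : ∀ v w, h v = h w := fun v w =>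
      flagGraph_reachable_le (r := fun v w => h v = h w) ⟨fun _ => rfl, Eq.symm, Eq.trans⟩
        hedge (hconn v w)
    rcases isEmpty_or_nonempty V with hV | ⟨⟨v₀⟩⟩
    · simp [Subsingleton.elim h 0]
    · exact Submodule.mem_span_singleton.2 ⟨h v₀, funext fun v => by simp [hconst v₀ v]⟩
  have hker_le : finrank ℚ (LinearMap.ker δ) ≤ 1 :=
    (Submodule.finrank_mono hker).trans (finrank_span_le_card _ |>.trans (by simp))
  have hrange_le : finrank ℚ (LinearMap.range δ) ≤ #O :=
    (Submodule.finrank_le _).trans (by simp)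
  have hrank := δ.finrank_range_add_finrank_ker
  have hO2 := hB.two_mul_card_isOrientation hO
  simp only [finrank_fintype_fun_eq_card] at hrank
  omega

theorem exists_mem_compatibleNumberings_apply_eq_one [Fintype F] [DecidableEq V] [Nonempty V]
    {K : Type} [Field K] (hB : IsFreeInvolutionOn ι B) (hcard : 2 * Fintype.card V ≤ #B) :
    ∃ ε ∈ compatibleNumberings K π B ι K, ∃ x₀, ε x₀ = 1 := by
  classical
  obtain ⟨O, hO⟩ := hB.exists_isOrientation
  let ext : (O → K) →ₗ[K] (F → K) := Function.ExtendByZero.linearMap K Subtype.val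
  let antisymm : (F → K) →ₗ[K] (F → K) := LinearMap.pi fun z =>
    if z ∈ B then LinearMap.proj (R := K) (φ := fun _ => K) z - LinearMap.proj (ι z) else 0
  let div : (F → K) →ₗ[K] (V → K) := LinearMap.pi fun v =>
    ∑ z with π z = v, LinearMap.proj (R := K) (φ := fun _ => K) z
  let bd := div ∘ₗ antisymm ∘ₗ ext
  have hout : ∀ g z, z ∉ B → antisymm g z = 0 := fun g z hz => by simp [antisymm, hz]
  have hanti : ∀ g, ∀ z ∈ B, antisymm g z + antisymm g (ι z) = 0 := fun g z hz => by
    simp [antisymm, hz, hB.mapsTo z hz, hB.involutive z hz]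
  have hdiv : ∀ g v, div g v = ∑ z with π z = v, g z := fun g v => by
    simp [div, LinearMap.sum_apply]
  have hsum : ∀ g, ∑ v, div (antisymm g) v = 0 := fun g => by
    simp only [hdiv]
    rw [sum_fiberwise, ← sum_subset (subset_univ B) fun z _ hz => hout g z hz]
    exact sum_involution (fun z _ => ι z) (hanti g) (fun z hz _ => hB.ne z hz)
      (fun z hz => hB.mapsTo z hz) (fun z hz => hB.involutive z hz)
  -- `bd` is not onto (its values sum to zero) although its source has dimension `#B / 2`
  have hrange : LinearMap.range bd ≠ ⊤ := by
    intro htop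
    obtain ⟨v₀⟩ := ‹Nonempty V›
    obtain ⟨h, hh⟩ : Pi.single v₀ 1 ∈ LinearMap.range bd := htop ▸ Submodule.mem_top
    have := hsum (ext h)
    rw [show div (antisymm (ext h)) = Pi.single v₀ 1 from hh] at this
    simp at this
  have hker : 0 < finrank K (LinearMap.ker bd) := by
    have hlt := Submodule.finrank_lt hrange
    have hrank := bd.finrank_range_add_finrank_ker
    have hO2 := hB.two_mul_card_isOrientation hO
    simp only [finrank_fintype_fun_eq_card, Fintype.card_coe] at hlt hrank
    omega
  obtain ⟨⟨h, hh⟩, hne⟩ := finrank_pos_iff_exists_ne_zero.1 hker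
  obtain ⟨o, ho⟩ : ∃ o, h o ≠ 0 := Function.ne_iff.1 fun h0 => hne (Subtype.ext h0)
  have hext : ∀ o : O, antisymm (ext h) o = h o := fun o => by
    have hιo : ¬ ∃ a : O, (a : F) = ι o := by
      rintro ⟨a, ha⟩
      exact (hO.mem_iff o (hO.subset o.2)).1 o.2 (ha ▸ a.2)
    simp [antisymm, ext, hO.subset o.2, Function.extend_apply' _ _ _ hιo]
  refine ⟨(h o)⁻¹ • antisymm (ext h), Submodule.smul_mem _ _ ⟨hout _, fun v => ?_, hanti _⟩,
    o, by simp [hext, ho]⟩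
  simpa [bd, hdiv] using congrFun (LinearMap.mem_ker.1 hh) v

end IsFreeInvolutionOn

section GenusOne

variable {π : F → V} {ι : F → F} {B : Finset F} [Fintype V] [Fintype F] [DecidableEq V]
  [DecidableEq F] {R M : Type} [CommRing R] [AddCommGroup M] [Module R M]

theorem compatibleNumberings_eq_bot_of_card_lt (hB : IsFreeInvolutionOn ι B)
    (hconn : (flagGraph π B ι).Preconnected) (hcard : #B < 2 * Fintype.card V) :
    compatibleNumberings R π B ι M = ⊥ := by
  refine (Submodule.eq_bot_iff _).2 fun f hf => funext fun z => ?_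
  by_cases hz : z ∈ B
  -- removing a cycle edge would leave a connected graph with fewer than `card V - 1` edges
  · refine apply_eq_zero_of_not_isCycleFlag hB hf hz fun hcyc => ?_
    have := (hB.sdiff_pair hz).two_mul_card_le_card_add_two
      (hcyc.preconnected_sdiff_pair hB hz hconn)
    have := hB.card_sdiff_pair_add_two hz
    omega
  · exact hf.1 z hz

theorem eq_zero_of_isCycleFlag_of_apply_eq_zero (hB : IsFreeInvolutionOn ι B)
    (hconn : (flagGraph π B ι).Preconnected) (hcard : #B ≤ 2 * Fintype.card V) {f : F → M}
    (hf : f ∈ compatibleNumberings R π B ι M) {x : F} (hx : x ∈ B)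
    (hcyc : IsCycleFlag π B ι x) (hfx : f x = 0) : f = 0 := by
  have hcard' : #(B \ {x, ι x}) < 2 * Fintype.card V := by
    have := hB.card_sdiff_pair_add_two hx
    omega
  have := compatibleNumberings_eq_bot_of_card_lt (R := R) (M := M) (hB.sdiff_pair hx)
    (hcyc.preconnected_sdiff_pair hB hx hconn) hcard'
  simpa [this] using mem_compatibleNumberings_sdiff_pair hf hx hfx

theorem isCycleFlag_iff_apply_ne_zero (hB : IsFreeInvolutionOn ι B)
    (hconn : (flagGraph π B ι).Preconnected) (hcard : #B ≤ 2 * Fintype.card V) {ε : F → R}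
    (hε : ε ∈ compatibleNumberings R π B ι R) (hε0 : ε ≠ 0) {x : F} (hx : x ∈ B) :
    IsCycleFlag π B ι x ↔ ε x ≠ 0 :=
  ⟨fun hcyc hεx => hε0 (eq_zero_of_isCycleFlag_of_apply_eq_zero hB hconn hcard hε hx hcyc hεx),
    fun hεx => by_contra fun hbridge => hεx (apply_eq_zero_of_not_isCycleFlag hB hε hx hbridge)⟩

theorem compatibleNumberings_eq_range [Nontrivial R] (hB : IsFreeInvolutionOn ι B)
    (hconn : (flagGraph π B ι).Preconnected) (hcard : #B ≤ 2 * Fintype.card V) {ε : F → R}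
    (hε : ε ∈ compatibleNumberings R π B ι R) {x₀ : F} (hεx₀ : ε x₀ = 1) :
    compatibleNumberings R π B ι M =
      LinearMap.range (LinearMap.pi fun z => ε z • (LinearMap.id : M →ₗ[R] M)) := by
  have hx₀ : x₀ ∈ B := by
    by_contra h
    simp [hε.1 x₀ h] at hεx₀
  have hε0 : ε ≠ 0 := fun h => by simp [h] at hεx₀
  have hcyc : IsCycleFlag π B ι x₀ :=
    (isCycleFlag_iff_apply_ne_zero hB hconn hcard hε hε0 hx₀).2 (by simp [hεx₀])
  ext f
  constructor
  · intro hf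
    refine ⟨f x₀, ?_⟩
    have := eq_zero_of_isCycleFlag_of_apply_eq_zero hB hconn hcard
      (sub_mem hf (smul_mem_compatibleNumberings hε (f x₀))) hx₀ hcyc (by simp [hεx₀])
    funext z
    simpa [sub_eq_zero, eq_comm] using congrFun this z
  · rintro ⟨ξ, rfl⟩
    exact smul_mem_compatibleNumberings hε ξ

end GenusOne

theorem comap_evalConditions_eq_dualAnnihilator {n : ℕ} (B : Finset F) (d : F → Fin n → ℝ)
    (ε : F → ℂ) :
    (evalConditions B n d).comap
        (LinearMap.pi fun z => ε z • (LinearMap.id : Dual ℂ (Fin n → ℂ) →ₗ[ℂ] _)) =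
      (Submodule.span ℂ ((fun v => algebraMap ℝ ℂ ∘ v) ''
        (d '' {x | x ∈ B ∧ ε x ≠ 0}))).dualAnnihilator := by
  ext ξ
  rw [Submodule.mem_comap, ← SetLike.mem_coe (x := ξ), Submodule.coe_dualAnnihilator_span]
  constructor
  · rintro h _ ⟨_, ⟨x, ⟨hx, hεx⟩, rfl⟩, rfl⟩
    exact (smul_eq_zero.1 (h x hx)).resolve_left hεx
  · intro h x hx
    by_cases hεx : ε x = 0
    · simp [hεx]
    · show ε x • ξ (algebraMap ℝ ℂ ∘ d x) = 0
      exact smul_eq_zero_of_right _ (h ⟨_, ⟨x, ⟨hx, hεx⟩, rfl⟩, rfl⟩)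

end FlagGraphs

theorem dim_dual_obstruction_genus_one_general
    {V F : Type} [Fintype V] [Fintype F] [DecidableEq V] [DecidableEq F] [Nonempty V]
    (n : ℕ)
    (π : F → V) (B : Finset F) (ι : F → F)
    (hιB : ∀ x ∈ B, ι x ∈ B)
    (hιinv : ∀ x ∈ B, ι (ι x) = x)
    (hιne : ∀ x ∈ B, ι x ≠ x)
    (hconn : (flagGraph π B ι).Connected)
    (hbetti : B.card + 2 = 2 * Fintype.card V + 2 * 1)
    (d : F → (Fin n → ℝ)) :
    Module.finrank ℂ
        ↥(compatibleNumberings ℂ π B ι (Module.Dual ℂ (Fin n → ℂ)) ⊓ evalConditions B n d) =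
      n - Module.finrank ℝ
        ↥(Submodule.span ℝ {v : Fin n → ℝ | ∃ x ∈ B,
            (flagGraph π (B \ {x, ι x}) ι).Reachable (π x) (π (ι x)) ∧ d x = v}) := by
  have hB : IsFreeInvolutionOn ι B := ⟨hιB, hιinv, hιne⟩
  have hcard : #B = 2 * Fintype.card V := by omega
  obtain ⟨ε, hε, x₀, hεx₀⟩ := hB.exists_mem_compatibleNumberings_apply_eq_one (K := ℂ) hcard.ge
  set Φ : Dual ℂ (Fin n → ℂ) →ₗ[ℂ] F → Dual ℂ (Fin n → ℂ) :=
    LinearMap.pi fun z => ε z • LinearMap.id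
  have hΦ : Function.Injective Φ := fun ξ η h => by simpa [Φ, hεx₀] using congrFun h x₀
  have hcycle : d '' {x | x ∈ B ∧ ε x ≠ 0} =
      {v | ∃ x ∈ B, (flagGraph π (B \ {x, ι x}) ι).Reachable (π x) (π (ι x)) ∧ d x = v} := by
    have hε0 : ε ≠ 0 := fun h => by simp [h] at hεx₀
    ext v
    simp only [Set.mem_image, Set.mem_ofPred_eq, and_assoc]
    refine exists_congr fun x => and_congr_right fun hx => ?_
    rw [← isCycleFlag_iff_apply_ne_zero hB hconn.preconnected hcard.le hε hε0 hx]
    rfl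
  rw [compatibleNumberings_eq_range hB hconn.preconnected hcard.le hε hεx₀,
    ← Submodule.map_comap_eq, comap_evalConditions_eq_dualAnnihilator,
    ← (Submodule.equivMapOfInjective Φ hΦ _).finrank_eq]
  have hdim := Subspace.finrank_add_finrank_dualAnnihilator_eq
    (Submodule.span ℂ ((fun v => algebraMap ℝ ℂ ∘ v) '' (d '' {x | x ∈ B ∧ ε x ≠ 0})))
  rw [finrank_span_image_algebraMap_comp, finrank_fin_fun] at hdim
  rw [← hcycle]
  omega

/-- For a genus one (first Betti number one) nonempty finite connected trivalent flag graph
with a direction assignment `d : B → ℝⁿ \ {0}` (with `d (ι x) = - d x`), the space of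
compatible numberings with values in `(ℂⁿ)*` annihilating the directions is isomorphic to
the annihilator of the real span of the directions of the cycle edges: its dimension is
`n` minus the dimension of that span. -/
theorem dim_dual_obstruction_genus_one
    {V F : Type} [Fintype V] [Fintype F] [DecidableEq V] [DecidableEq F] [Nonempty V]
    (n : ℕ) (hn : 1 ≤ n)
    (π : F → V) (B : Finset F) (ι : F → F)
    (htri : ∀ v : V, (Finset.univ.filter (fun x => π x = v)).card = 3)
    (hιB : ∀ x ∈ B, ι x ∈ B)
    (hιinv : ∀ x ∈ B, ι (ι x) = x)
    (hιne : ∀ x ∈ B, ι x ≠ x)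
    (hconn : (flagGraph π B ι).Connected)
    (hbetti : B.card + 2 = 2 * Fintype.card V + 2 * 1)
    (d : F → (Fin n → ℝ))
    (hd0 : ∀ x ∈ B, d x ≠ 0)
    (hdneg : ∀ x ∈ B, d (ι x) = - d x) :
    Module.finrank ℂ
        ↥(compatibleNumberings ℂ π B ι (Module.Dual ℂ (Fin n → ℂ)) ⊓ evalConditions B n d) =
      n - Module.finrank ℝ
        ↥(Submodule.span ℝ {v : Fin n → ℝ | ∃ x ∈ B,
            (flagGraph π (B \ {x, ι x}) ι).Reachable (π x) (π (ι x)) ∧ d x = v}) :=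
  dim_dual_obstruction_genus_one_general n π B ι hιB hιinv hιne hconn hbetti d
end

section
/- Let Γ be a finite trivalent flag graph, M a ℂ-vector space, and f a compatible numbering of Γ with values in M. Then the support of f is a union of loops in the following sense: (a) every bounded flag x with f(x) ≠ 0 belongs to a bounded edge lying on a cycle of Γ (i.e., an edge whose deletion does not increase the number of connected components of the underlying graph), and (b) for every vertex v, the number of flags x with π(x) = v and f(x) ≠ 0 is never equal to exactly one; in particular the subgraph of edges on which f is nonzero has no one-valent end. -/
/-!
Let `C` be the set of vertices reachable from `π x` once the edge `{x, ι x}` is deleted, and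
suppose `π (ι x) ∉ C`. Summing the vertex relations over `C` gives `∑ f = 0` over all flags
at `C`. Every other bounded flag at `C` has its partner at `C`, so the edge relations cancel
those flags in pairs, leaving `f x = 0`. Part (b) is the vertex relation itself: a single
nonzero flag at `v` would have to equal the vertex sum, which is `0`.
-/

open Finset

theorem flagGraph_reachable {V F : Type} {π : F → V} {B : Finset F} {ι : F → F}
    {y : F} (hy : y ∈ B) : (flagGraph π B ι).Reachable (π y) (π (ι y)) := by
  by_cases h : π y = π (ι y)
  · exact h ▸ SimpleGraph.Reachable.refl _
  · exact (SimpleGraph.fromRel_adj _ _ _ |>.2 ⟨h, Or.inl ⟨y, hy, rfl, rfl⟩⟩).reachable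

namespace compatibleNumberings

variable {R : Type} [CommRing R] {V F : Type} [Fintype F] [DecidableEq V]
  {π : F → V} {B : Finset F} {ι : F → F} {M : Type} [AddCommGroup M] [Module R M]
  {f : F → M}

theorem sum_filter_comp_eq_zero (hf : f ∈ compatibleNumberings R π B ι M)
    (p : V → Prop) [DecidablePred p] :
    ∑ y ∈ univ.filter (fun y => p (π y)), f y = 0 := by
  rw [← sum_fiberwise_of_maps_to (g := π) (fun y hy => mem_image_of_mem π hy)]
  refine sum_eq_zero fun v hv => ?_
  obtain ⟨z, hz, rfl⟩ := mem_image.1 hv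
  have hfiber : (univ.filter fun y => p (π y)).filter (fun y => π y = π z)
      = univ.filter fun y => π y = π z := by
    ext y
    simp only [mem_filter, mem_univ, true_and, and_iff_right_iff_imp]
    exact fun hy => hy ▸ (mem_filter.1 hz).2
  rw [hfiber, hf.2.1]

theorem sum_eq_zero_of_involution_mapsTo (hf : f ∈ compatibleNumberings R π B ι M)
    (hιB : ∀ x ∈ B, ι x ∈ B) (hιinv : ∀ x ∈ B, ι (ι x) = x) (hιne : ∀ x ∈ B, ι x ≠ x)
    {s : Finset F} (hs : ∀ y ∈ s, y ∈ B → ι y ∈ s) :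
    ∑ y ∈ s, f y = 0 := by
  classical
  obtain ⟨hunb, -, hedge⟩ := hf
  rw [← sum_filter_of_ne (p := (· ∈ B)) fun y _ hy => not_not.1 (mt (hunb y) hy)]
  refine sum_involution (fun y _ => ι y) (fun y hy => hedge y (mem_filter.1 hy).2)
    (fun y hy _ => hιne y (mem_filter.1 hy).2) (fun y hy => ?_)
    (fun y hy => hιinv y (mem_filter.1 hy).2)
  obtain ⟨hys, hyB⟩ := mem_filter.1 hy
  exact mem_filter.2 ⟨hs y hys hyB, hιB y hyB⟩

theorem ncard_support_at_ne_one (hf : f ∈ compatibleNumberings R π B ι M) (v : V) :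
    ({x | π x = v ∧ f x ≠ 0} : Set F).ncard ≠ 1 := by
  intro hone
  obtain ⟨a, ha⟩ := Set.ncard_eq_one.1 hone
  obtain ⟨hav, hfa⟩ : a ∈ ({x | π x = v ∧ f x ≠ 0} : Set F) := ha ▸ Set.mem_singleton a
  refine hfa ?_
  rw [← hf.2.1 v, sum_eq_single_of_mem a (by simpa using hav)]
  intro b hb hba
  by_contra hfb
  have hb' : b ∈ ({x | π x = v ∧ f x ≠ 0} : Set F) := ⟨by simpa using hb, hfb⟩
  exact hba (by simpa [ha] using hb')

theorem eq_zero_of_not_reachable [DecidableEq F]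
    (hf : f ∈ compatibleNumberings R π B ι M)
    (hιB : ∀ x ∈ B, ι x ∈ B) (hιinv : ∀ x ∈ B, ι (ι x) = x) (hιne : ∀ x ∈ B, ι x ≠ x)
    {x : F} (hbridge : ¬ (flagGraph π (B \ {x, ι x}) ι).Reachable (π x) (π (ι x))) :
    f x = 0 := by
  classical
  set G := flagGraph π (B \ {x, ι x}) ι
  set s := univ.filter fun y => G.Reachable (π x) (π y)
  have hxs : x ∈ s := by simp [s]
  have hιxs : ι x ∉ s := by simpa [s] using hbridge
  have hrest : ∑ y ∈ s.erase x, f y = 0 := by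
    refine sum_eq_zero_of_involution_mapsTo hf hιB hιinv hιne fun y hy hyB => ?_
    obtain ⟨hyx, hys⟩ := mem_erase.1 hy
    have hyιx : y ≠ ι x := fun h => hιxs (h ▸ hys)
    have hιyx : ι y ≠ x := fun h => hyιx (by rw [← h, hιinv y hyB])
    have hyB' : y ∈ B \ {x, ι x} := by simp [hyB, hyx, hyιx]
    refine mem_erase.2 ⟨hιyx, ?_⟩
    simpa [s] using (mem_filter.1 hys).2.trans (flagGraph_reachable hyB')
  have htotal := sum_filter_comp_eq_zero hf (fun v => G.Reachable (π x) v)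
  rwa [← add_sum_erase _ _ hxs, hrest, add_zero] at htotal

end compatibleNumberings

theorem compatibleNumbering_support_union_of_loops_general
    {V F : Type} [Fintype F] [DecidableEq V] [DecidableEq F]
    (π : F → V) (B : Finset F) (ι : F → F)
    (hιB : ∀ x ∈ B, ι x ∈ B)
    (hιinv : ∀ x ∈ B, ι (ι x) = x)
    (hιne : ∀ x ∈ B, ι x ≠ x)
    (M : Type) [AddCommGroup M] [Module ℂ M]
    (f : F → M) (hf : f ∈ compatibleNumberings ℂ π B ι M) :
    (∀ x ∈ B, f x ≠ 0 →
        (flagGraph π (B \ {x, ι x}) ι).Reachable (π x) (π (ι x))) ∧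
    (∀ v : V, ({x | π x = v ∧ f x ≠ 0} : Set F).ncard ≠ 1) :=
  ⟨fun _ _ hfx => by_contra fun hbridge =>
      hfx (compatibleNumberings.eq_zero_of_not_reachable hf hιB hιinv hιne hbridge),
    compatibleNumberings.ncard_support_at_ne_one hf⟩

/-- The support of a compatible numbering of a finite trivalent flag graph is a union of
loops: (a) every bounded flag with nonzero value belongs to an edge lying on a cycle
(its endpoints remain joined after the edge is deleted), and (b) at every vertex the
number of flags carrying a nonzero value is never exactly one, so the support has no
one-valent end. -/
theorem compatibleNumbering_support_union_of_loops
    {V F : Type} [Fintype V] [Fintype F] [DecidableEq V] [DecidableEq F]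
    (π : F → V) (B : Finset F) (ι : F → F)
    (htri : ∀ v : V, (Finset.univ.filter (fun x => π x = v)).card = 3)
    (hιB : ∀ x ∈ B, ι x ∈ B)
    (hιinv : ∀ x ∈ B, ι (ι x) = x)
    (hιne : ∀ x ∈ B, ι x ≠ x)
    (M : Type) [AddCommGroup M] [Module ℂ M]
    (f : F → M) (hf : f ∈ compatibleNumberings ℂ π B ι M) :
    (∀ x ∈ B, f x ≠ 0 →
        (flagGraph π (B \ {x, ι x}) ι).Reachable (π x) (π (ι x))) ∧
    (∀ v : V, ({x | π x = v ∧ f x ≠ 0} : Set F).ncard ≠ 1) :=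
  compatibleNumbering_support_union_of_loops_general π B ι hιB hιinv hιne M f hf
end

section
/- Fix a, b ∈ ℝ and nonzero complex numbers k, l, m. For each real τ > 1, let V_τ = {(x, y) ∈ ℂ² : x ≠ 0, y ≠ 0, and k·τ^a·x + l·τ^b·y + m = 0}. Then a point p ∈ ℝ² lies on the tropical line T_{a,b} if and only if there exist a sequence of reals τ_n with τ_n → ∞ and points (x_n, y_n) ∈ V_{τ_n} such that Log_{τ_n}(x_n, y_n) → p. In other words, the limit as τ → ∞ of the sets Log_τ(V_τ) is exactly the tropical curve defined by the tropical polynomial max{a + X, b + Y, 0}. -/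
open Filter Topology

/-- The coordinatewise logarithm map with base `τ`:
`Log_τ (x, y) = (log |x| / log τ, log |y| / log τ)`. -/
noncomputable def logMap (τ : ℝ) (z : ℂ × ℂ) : ℝ × ℝ :=
  (Real.log ‖z.1‖ / Real.log τ, Real.log ‖z.2‖ / Real.log τ)

/-- The curve `V_τ = {(x, y) ∈ (ℂ*)² : k·τ^a·x + l·τ^b·y + m = 0}`. -/
def lineSet (k l m : ℂ) (a b τ : ℝ) : Set (ℂ × ℂ) :=
  {z | z.1 ≠ 0 ∧ z.2 ≠ 0 ∧
    k * ((τ ^ a : ℝ) : ℂ) * z.1 + l * ((τ ^ b : ℝ) : ℂ) * z.2 + m = 0}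

/-- The tropical line `T_{a,b}`: the corner locus of the tropical polynomial
`max {a + X, b + Y, 0}`, i.e. the points where at least two of the three terms attain
the maximum. -/
def tropLine (a b : ℝ) (p : ℝ × ℝ) : Prop :=
  (a + p.1 = b + p.2 ∧ 0 ≤ a + p.1) ∨
  (a + p.1 = 0 ∧ b + p.2 ≤ 0) ∨
  (b + p.2 = 0 ∧ a + p.1 ≤ 0)

/-!
For `(x, y) ∈ V_τ` the three monomials `u = k τ^a x`, `v = l τ^b y` and `m` sum to zero, so each
has norm at most twice the larger of the other two. Taking `log / log τ` and letting `τ → ∞`, each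
of `a + X`, `b + Y`, `0` is at most the maximum of the other two: the maximum is attained twice.

Conversely, `x = (i m / k) τ^X` and `y = -(m / l) τ^(-b) (1 + i τ^(a + X))` lie on `V_τ`, and
`Log_τ (x, y) → (X, max (a + X) 0 - b)` because `|1 + i τ^s|` lies between `τ^(max s 0)` and
twice that. This reaches the part of `T_{a,b}` where `b + Y = max (a + X) 0`; the rest follows by
exchanging the two coordinates.
-/

section LogRatio

variable {ι : Type*} {L : Filter ι} {τ : ι → ℝ}

theorem tendsto_log_div_log_of_le_of_le (hτ1 : ∀ i, 1 < τ i) (hτ : Tendsto τ L atTop)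
    {u : ι → ℝ} {c₁ c₂ r : ℝ} (hc₁ : 0 < c₁)
    (h₁ : ∀ i, c₁ * τ i ^ r ≤ u i) (h₂ : ∀ i, u i ≤ c₂ * τ i ^ r) :
    Tendsto (fun i => Real.log (u i) / Real.log (τ i)) L (𝓝 r) := by
  have hpow : ∀ i, 0 < τ i ^ r := fun i => Real.rpow_pos_of_pos (zero_lt_one.trans (hτ1 i)) r
  have hu : ∀ i, 0 < u i := fun i => (mul_pos hc₁ (hpow i)).trans_le (h₁ i)
  have hdecomp : ∀ i, Real.log (u i) / Real.log (τ i) =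
      r + Real.log (u i / τ i ^ r) / Real.log (τ i) := by
    intro i
    rw [Real.log_div (hu i).ne' (hpow i).ne', Real.log_rpow (zero_lt_one.trans (hτ1 i))]
    field_simp [(Real.log_pos (hτ1 i)).ne']
    ring
  simp_rw [hdecomp]
  simpa using tendsto_const_nhds.add <| tendsto_bdd_div_atTop_nhds_zero
    (.of_forall fun i => Real.log_le_log hc₁ ((le_div_iff₀ (hpow i)).2 (h₁ i)))
    (.of_forall fun i => Real.log_le_log (div_pos (hu i) (hpow i))
      ((div_le_iff₀ (hpow i)).2 (h₂ i)))
    (Real.tendsto_log_atTop.comp hτ)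

theorem log_norm_mul_rpow_mul_div_log {c w : ℂ} (hc : c ≠ 0) (hw : w ≠ 0) {t : ℝ}
    (ht : 1 < t) (r : ℝ) : Real.log ‖c * ((t ^ r : ℝ) : ℂ) * w‖ / Real.log t =
      Real.log ‖c‖ / Real.log t + r + Real.log ‖w‖ / Real.log t := by
  have hpow : 0 < t ^ r := Real.rpow_pos_of_pos (zero_lt_one.trans ht) r
  rw [norm_mul, norm_mul, Complex.norm_real, Real.norm_of_nonneg hpow.le,
    Real.log_mul (by positivity) (norm_ne_zero_iff.2 hw),
    Real.log_mul (norm_ne_zero_iff.2 hc) hpow.ne',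
    Real.log_rpow (zero_lt_one.trans ht)]
  field_simp [(Real.log_pos ht).ne']

theorem tendsto_log_norm_mul_rpow_mul_div_log (hτ1 : ∀ i, 1 < τ i) (hτ : Tendsto τ L atTop)
    {c : ℂ} (hc : c ≠ 0) {w : ι → ℂ} (hw : ∀ i, w i ≠ 0) {q : ℝ}
    (h : Tendsto (fun i => Real.log ‖w i‖ / Real.log (τ i)) L (𝓝 q)) (r : ℝ) :
    Tendsto (fun i => Real.log ‖c * ((τ i ^ r : ℝ) : ℂ) * w i‖ / Real.log (τ i)) L
      (𝓝 (r + q)) := by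
  simp_rw [log_norm_mul_rpow_mul_div_log hc (hw _) (hτ1 _)]
  simpa using (((Real.tendsto_log_atTop.comp hτ).const_div_atTop _).add_const r).add h

theorem tendsto_log_norm_one_add_rpow_mul_I_div_log (hτ1 : ∀ i, 1 < τ i)
    (hτ : Tendsto τ L atTop) (r : ℝ) :
    Tendsto (fun i => Real.log ‖1 + ((τ i ^ r : ℝ) : ℂ) * Complex.I‖ / Real.log (τ i)) L
      (𝓝 (max r 0)) := by
  refine tendsto_log_div_log_of_le_of_le hτ1 hτ one_pos (c₂ := 2) (fun i => ?_) (fun i => ?_)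
  all_goals
    have hpow : 0 < τ i ^ r := Real.rpow_pos_of_pos (zero_lt_one.trans (hτ1 i)) r
    have hmax : τ i ^ max r 0 = max (τ i ^ r) 1 := by
      rw [← Real.rpow_zero (τ i)]
      exact (Real.monotone_rpow_of_base_ge_one (hτ1 i).le).map_max
  · rw [one_mul, hmax, max_le_iff]
    constructor
    · simpa [abs_of_pos hpow] using Complex.abs_im_le_norm (1 + ((τ i ^ r : ℝ) : ℂ) * Complex.I)
    · simpa using Complex.abs_re_le_norm (1 + ((τ i ^ r : ℝ) : ℂ) * Complex.I)
  · calc ‖1 + ((τ i ^ r : ℝ) : ℂ) * Complex.I‖ ≤ 1 + τ i ^ r := by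
          simpa [abs_of_pos hpow] using norm_add_le (1 : ℂ) (((τ i ^ r : ℝ) : ℂ) * Complex.I)
      _ ≤ 2 * τ i ^ max r 0 := by
          rw [hmax]; linarith [le_max_left (τ i ^ r) 1, le_max_right (τ i ^ r) 1]

theorem le_max_of_tendsto_log_norm_div_log [L.NeBot] {E : Type*} [NormedAddCommGroup E]
    (hτ1 : ∀ i, 1 < τ i) (hτ : Tendsto τ L atTop) {u v w : ι → E}
    (hsum : ∀ i, u i + v i + w i = 0) (hu : ∀ i, u i ≠ 0) (hv : ∀ i, v i ≠ 0)
    (hw : ∀ i, w i ≠ 0) {α β γ : ℝ}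
    (hα : Tendsto (fun i => Real.log ‖u i‖ / Real.log (τ i)) L (𝓝 α))
    (hβ : Tendsto (fun i => Real.log ‖v i‖ / Real.log (τ i)) L (𝓝 β))
    (hγ : Tendsto (fun i => Real.log ‖w i‖ / Real.log (τ i)) L (𝓝 γ)) :
    α ≤ max β γ := by
  have hbound : Tendsto (fun i => Real.log 2 / Real.log (τ i) +
      max (Real.log ‖v i‖ / Real.log (τ i)) (Real.log ‖w i‖ / Real.log (τ i))) L
      (𝓝 (max β γ)) := by
    simpa using ((Real.tendsto_log_atTop.comp hτ).const_div_atTop (Real.log 2)).add (hβ.max hγ)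
  refine le_of_tendsto_of_tendsto' hα hbound fun i => ?_
  have hv' := norm_pos_iff.2 (hv i)
  have hw' := norm_pos_iff.2 (hw i)
  have htri : ‖u i‖ ≤ 2 * max ‖v i‖ ‖w i‖ := calc
    ‖u i‖ = ‖v i + w i‖ := by
      rw [eq_neg_of_add_eq_zero_left (a := u i) (by rw [← add_assoc]; exact hsum i), norm_neg]
    _ ≤ ‖v i‖ + ‖w i‖ := norm_add_le _ _
    _ ≤ 2 * max ‖v i‖ ‖w i‖ := by linarith [le_max_left ‖v i‖ ‖w i‖, le_max_right ‖v i‖ ‖w i‖]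
  have hlog : Real.log ‖u i‖ ≤ Real.log 2 + max (Real.log ‖v i‖) (Real.log ‖w i‖) := by
    rw [← Real.strictMonoOn_log.monotoneOn.map_max hv' hw',
      ← Real.log_mul two_ne_zero (lt_max_of_lt_left hv').ne']
    exact Real.log_le_log (norm_pos_iff.2 (hu i)) htri
  rw [max_div_div_right (Real.log_pos (hτ1 i)).le, ← add_div]
  exact div_le_div_of_nonneg_right hlog (Real.log_pos (hτ1 i)).le

end LogRatio

theorem tropLine_iff_eq_max {a b : ℝ} {p : ℝ × ℝ} :
    tropLine a b p ↔ b + p.2 = max (a + p.1) 0 ∨ a + p.1 = max (b + p.2) 0 := by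
  unfold tropLine
  grind

theorem tropLine_of_le_max {a b : ℝ} {p : ℝ × ℝ} (h₁ : a + p.1 ≤ max (b + p.2) 0)
    (h₂ : b + p.2 ≤ max (a + p.1) 0) (h₀ : 0 ≤ max (a + p.1) (b + p.2)) : tropLine a b p := by
  unfold tropLine
  simp only [le_max_iff] at h₁ h₂ h₀
  grind

def IsTropicalLimit (k l m : ℂ) (a b : ℝ) (p : ℝ × ℝ) : Prop :=
  ∃ (τ : ℕ → ℝ) (z : ℕ → ℂ × ℂ), (∀ n, 1 < τ n) ∧ Tendsto τ atTop atTop ∧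
    (∀ n, z n ∈ lineSet k l m a b (τ n)) ∧ Tendsto (fun n => logMap (τ n) (z n)) atTop (𝓝 p)

theorem IsTropicalLimit.of_swap {k l m : ℂ} {a b : ℝ} {p : ℝ × ℝ}
    (h : IsTropicalLimit l k m b a p.swap) : IsTropicalLimit k l m a b p := by
  obtain ⟨τ, z, hτ1, hτ, hz, hlim⟩ := h
  refine ⟨τ, fun n => (z n).swap, hτ1, hτ, fun n => ?_, ?_⟩
  · obtain ⟨hx, hy, hline⟩ := hz n
    exact ⟨hy, hx, by simp only [Prod.fst_swap, Prod.snd_swap]; linear_combination hline⟩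
  · exact (continuous_swap.tendsto _).comp hlim

theorem isTropicalLimit_of_eq_max {k l m : ℂ} (hk : k ≠ 0) (hl : l ≠ 0) (hm : m ≠ 0)
    {a b : ℝ} {p : ℝ × ℝ} (h : b + p.2 = max (a + p.1) 0) : IsTropicalLimit k l m a b p := by
  set τ : ℕ → ℝ := fun n => n + 2
  have hτ1 : ∀ n, 1 < τ n := fun n => by simp only [τ]; linarith [n.cast_nonneg (α := ℝ)]
  have hτ : Tendsto τ atTop atTop := tendsto_atTop_add_const_right _ 2 tendsto_natCast_atTop_atTop
  have hpow : ∀ n (r : ℝ), ((τ n ^ r : ℝ) : ℂ) ≠ 0 := fun n r =>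
    Complex.ofReal_ne_zero.2 (Real.rpow_pos_of_pos (zero_lt_one.trans (hτ1 n)) r).ne'
  have hone_add : ∀ n, 1 + ((τ n ^ (a + p.1) : ℝ) : ℂ) * Complex.I ≠ 0 := fun n h => by
    simpa using congrArg Complex.re h
  refine ⟨τ, fun n => (Complex.I * m / k * ((τ n ^ p.1 : ℝ) : ℂ),
    -(m / l) * ((τ n ^ (-b) : ℝ) : ℂ) * (1 + ((τ n ^ (a + p.1) : ℝ) : ℂ) * Complex.I)),
    hτ1, hτ, fun n => ⟨?_, ?_, ?_⟩, ?_⟩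
  · exact mul_ne_zero (by simp [hm, hk]) (hpow n _)
  · exact mul_ne_zero (mul_ne_zero (by simp [hm, hl]) (hpow n _)) (hone_add n)
  · have hτ0 := zero_lt_one.trans (hτ1 n)
    simp only [Real.rpow_add hτ0, Real.rpow_neg hτ0.le, Complex.ofReal_mul, Complex.ofReal_inv]
    field_simp [hpow n b]
    ring
  · refine Tendsto.prodMk_nhds ?_ ?_
    · simpa using tendsto_log_norm_mul_rpow_mul_div_log hτ1 hτ (c := Complex.I * m / k)
        (by simp [hm, hk]) (w := fun _ => 1) (fun _ => one_ne_zero) (q := 0) (by simp) p.1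
    · convert tendsto_log_norm_mul_rpow_mul_div_log hτ1 hτ (neg_ne_zero.2 (div_ne_zero hm hl))
        hone_add (tendsto_log_norm_one_add_rpow_mul_I_div_log hτ1 hτ (a + p.1)) (-b) using 2
      linarith

theorem tropLine_of_isTropicalLimit {k l m : ℂ} (hk : k ≠ 0) (hl : l ≠ 0) (hm : m ≠ 0)
    {a b : ℝ} {p : ℝ × ℝ} (h : IsTropicalLimit k l m a b p) : tropLine a b p := by
  obtain ⟨τ, z, hτ1, hτ, hz, hlim⟩ := h
  set u : ℕ → ℂ := fun n => k * ((τ n ^ a : ℝ) : ℂ) * (z n).1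
  set v : ℕ → ℂ := fun n => l * ((τ n ^ b : ℝ) : ℂ) * (z n).2
  have hpow : ∀ n (r : ℝ), ((τ n ^ r : ℝ) : ℂ) ≠ 0 := fun n r =>
    Complex.ofReal_ne_zero.2 (Real.rpow_pos_of_pos (zero_lt_one.trans (hτ1 n)) r).ne'
  have hu : ∀ n, u n ≠ 0 := fun n => mul_ne_zero (mul_ne_zero hk (hpow n a)) (hz n).1
  have hv : ∀ n, v n ≠ 0 := fun n => mul_ne_zero (mul_ne_zero hl (hpow n b)) (hz n).2.1
  have hsum : ∀ n, u n + v n + m = 0 := fun n => (hz n).2.2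
  have hα : Tendsto (fun n => Real.log ‖u n‖ / Real.log (τ n)) atTop (𝓝 (a + p.1)) :=
    tendsto_log_norm_mul_rpow_mul_div_log hτ1 hτ hk (fun n => (hz n).1)
      ((continuous_fst.tendsto p).comp hlim) a
  have hβ : Tendsto (fun n => Real.log ‖v n‖ / Real.log (τ n)) atTop (𝓝 (b + p.2)) :=
    tendsto_log_norm_mul_rpow_mul_div_log hτ1 hτ hl (fun n => (hz n).2.1)
      ((continuous_snd.tendsto p).comp hlim) b
  have hγ : Tendsto (fun n => Real.log ‖m‖ / Real.log (τ n)) atTop (𝓝 0) :=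
    (Real.tendsto_log_atTop.comp hτ).const_div_atTop _
  apply tropLine_of_le_max
  · exact le_max_of_tendsto_log_norm_div_log hτ1 hτ hsum hu hv (fun _ => hm) hα hβ hγ
  · exact le_max_of_tendsto_log_norm_div_log hτ1 hτ (fun n => by linear_combination hsum n)
      hv hu (fun _ => hm) hβ hα hγ
  · exact le_max_of_tendsto_log_norm_div_log hτ1 hτ (fun n => by linear_combination hsum n)
      (fun _ => hm) hu hv hγ hα hβ

/-- Tropicalization of the family of lines `k·τ^a·x + l·τ^b·y + m = 0`: a point
`p ∈ ℝ²` lies on the tropical line `T_{a,b}` if and only if it is a limit of points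
`Log_{τ_n}(x_n, y_n)` with `(x_n, y_n) ∈ V_{τ_n}` and `τ_n → ∞`. -/
theorem tropicalization_of_lines (a b : ℝ) (k l m : ℂ)
    (hk : k ≠ 0) (hl : l ≠ 0) (hm : m ≠ 0) (p : ℝ × ℝ) :
    tropLine a b p ↔
      ∃ (τ : ℕ → ℝ) (z : ℕ → ℂ × ℂ),
        (∀ n, 1 < τ n) ∧
        Tendsto τ atTop atTop ∧
        (∀ n, z n ∈ lineSet k l m a b (τ n)) ∧
        Tendsto (fun n => logMap (τ n) (z n)) atTop (𝓝 p) := by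
  refine ⟨fun hp => ?_, tropLine_of_isTropicalLimit hk hl hm⟩
  rcases tropLine_iff_eq_max.1 hp with h | h
  · exact isTropicalLimit_of_eq_max hk hl hm h
  · exact (isTropicalLimit_of_eq_max hl hk hm h).of_swap
end

section
/- Let m ≥ 1 and let W ⊆ ℝ^m be an ℝ-linear subspace that is spanned by vectors with rational coordinates. Then the image of the set {z ∈ ℂ^m : the coordinatewise real part of z lies in W and the coordinatewise imaginary part of z lies in W} under the coordinatewise exponential map z ↦ (exp z₁, …, exp z_m) is a closed subset of {v ∈ ℂ^m : v_i ≠ 0 for all i}, equipped with its subspace topology. -/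
/-!
Writing `z = x + i y`, a point `v` of the torus lies in the image exactly when `log ‖v‖ ∈ W`
and `v / ‖v‖ = exp (i y)` for some `y ∈ W`. The first condition is closed because `W` is a
finite-dimensional subspace. For the second, rationality lets us span `W` by finitely many
integer vectors `b_j`; every `y ∈ W` then differs by a vector in `2π ℤ^m` from a point of the
compact parallelepiped spanned by the `2π b_j`, so `exp (i W)` is a compact set.
-/

open Complex Set Submodule

variable {ι : Type*}

def intLattice (ι : Type*) : AddSubgroup (ι → ℝ) :=
  AddSubgroup.pi univ fun _ => AddSubgroup.zmultiples 1

lemma mem_intLattice {v : ι → ℝ} : v ∈ intLattice ι ↔ ∀ i, ∃ n : ℤ, (n : ℝ) = v i := by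
  simp [intLattice, AddSubgroup.mem_pi, AddSubgroup.mem_zmultiples_iff]

lemma exists_intCast_smul_mem_intLattice [Finite ι] {v : ι → ℝ}
    (hv : ∀ i, ∃ q : ℚ, v i = q) : ∃ d : ℤ, d ≠ 0 ∧ (d : ℝ) • v ∈ intLattice ι := by
  choose q hq using hv
  obtain ⟨⟨d, hd⟩, hdq⟩ := IsLocalization.exist_integer_multiples_of_finite (nonZeroDivisors ℤ) q
  refine ⟨d, nonZeroDivisors.ne_zero hd, mem_intLattice.2 fun i => ?_⟩
  obtain ⟨n, hn⟩ := hdq i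
  refine ⟨n, ?_⟩
  simp only [Pi.smul_apply, smul_eq_mul, hq i]
  simp only [algebraMap_int_eq, eq_intCast, zsmul_eq_mul] at hn
  exact_mod_cast hn

lemma exists_finset_subset_intLattice_span_eq [Finite ι] {S : Set (ι → ℝ)}
    (hS : ∀ v ∈ S, ∀ i, ∃ q : ℚ, v i = q) :
    ∃ T : Finset (ι → ℝ),
      (T : Set (ι → ℝ)) ⊆ intLattice ι ∧ span ℝ (T : Set (ι → ℝ)) = span ℝ S := by
  set S' := (span ℝ S : Set (ι → ℝ)) ∩ intLattice ι
  have hS' : span ℝ S' = span ℝ S := by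
    refine le_antisymm (span_le.2 inter_subset_left) (span_le.2 fun v hv => ?_)
    obtain ⟨d, hd, hdv⟩ := exists_intCast_smul_mem_intLattice (hS v hv)
    have hv' : v = (d : ℝ)⁻¹ • ((d : ℝ) • v) := by
      rw [inv_smul_smul₀ (Int.cast_ne_zero.2 hd)]
    rw [hv']
    exact smul_mem _ _ (subset_span ⟨smul_mem _ _ (subset_span hv), hdv⟩)
  obtain ⟨T, hTS', hTspan, hTli⟩ := exists_linearIndependent ℝ S'
  exact ⟨hTli.setFinite.toFinset, by simpa using hTS'.trans inter_subset_right,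
    by simpa [hS'] using hTspan⟩

lemma exists_mem_parallelepiped_sub_mem_span_int {κ E : Type*} [Fintype κ] [AddCommGroup E]
    [Module ℝ E] (b : κ → E) {w : E} (hw : w ∈ span ℝ (range b)) :
    ∃ p ∈ parallelepiped b, w - p ∈ span ℤ (range b) := by
  obtain ⟨c, rfl⟩ := (mem_span_range_iff_exists_fun ℝ).1 hw
  refine ⟨∑ j, Int.fract (c j) • b j, (mem_parallelepiped_iff _ _).2
    ⟨fun j => Int.fract (c j), ⟨fun j => Int.fract_nonneg _, fun j => (Int.fract_lt_one _).le⟩,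
      rfl⟩, (mem_span_range_iff_exists_fun ℤ).2 ⟨fun j => ⌊c j⌋, ?_⟩⟩
  simp only [← Finset.sum_sub_distrib, ← sub_smul, Int.self_sub_fract, Int.cast_smul_eq_zsmul]

lemma isCompact_parallelepiped {κ E : Type*} [Fintype κ] [AddCommGroup E] [Module ℝ E]
    [TopologicalSpace E] [ContinuousAdd E] [ContinuousSMul ℝ E] (b : κ → E) :
    IsCompact (parallelepiped b) :=
  isCompact_Icc.image (by fun_prop)

noncomputable def expI (y : ι → ℝ) : ι → ℂ := fun i => exp (y i * I)

lemma continuous_expI : Continuous (expI : (ι → ℝ) → ι → ℂ) := by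
  unfold expI; fun_prop

lemma expI_add_two_pi_smul (y : ι → ℝ) {x : ι → ℝ} (hx : x ∈ intLattice ι) :
    expI (y + (2 * Real.pi) • x) = expI y := by
  funext i
  obtain ⟨n, hn⟩ := mem_intLattice.1 hx i
  simp only [expI, Pi.add_apply, Pi.smul_apply, smul_eq_mul, ← hn]
  convert (exp_periodic.int_mul n) (y i * I) using 2
  push_cast
  ring

lemma image_expI_span_eq {T : Finset (ι → ℝ)} (hT : (T : Set (ι → ℝ)) ⊆ intLattice ι) :
    expI '' (span ℝ (T : Set (ι → ℝ)) : Set (ι → ℝ)) =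
      (fun p => expI ((2 * Real.pi) • p)) '' parallelepiped ((↑) : T → ι → ℝ) := by
  have hspan : span ℝ (range ((↑) : T → ι → ℝ)) = span ℝ (T : Set (ι → ℝ)) := by
    rw [Subtype.range_coe]
  apply Subset.antisymm
  · rintro _ ⟨y, hy, rfl⟩
    have hw : (2 * Real.pi)⁻¹ • y ∈ span ℝ (range ((↑) : T → ι → ℝ)) :=
      hspan ▸ smul_mem _ _ hy
    obtain ⟨p, hp, hwp⟩ := exists_mem_parallelepiped_sub_mem_span_int _ hw
    have hlat : (2 * Real.pi)⁻¹ • y - p ∈ intLattice ι :=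
      span_le (p := (intLattice ι).toIntSubmodule).2 (by simpa using hT) hwp
    refine ⟨p, hp, ?_⟩
    dsimp only
    rw [← expI_add_two_pi_smul _ hlat, ← smul_add, add_sub_cancel,
      smul_inv_smul₀ Real.two_pi_pos.ne']
  · rintro _ ⟨p, hp, rfl⟩
    refine ⟨_, smul_mem _ _ ?_, rfl⟩
    obtain ⟨t, -, rfl⟩ := (mem_parallelepiped_iff _ _).1 hp
    exact hspan ▸ (mem_span_range_iff_exists_fun ℝ).2 ⟨t, rfl⟩

lemma isCompact_image_expI_span {T : Finset (ι → ℝ)} (hT : (T : Set (ι → ℝ)) ⊆ intLattice ι) :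
    IsCompact (expI '' (span ℝ (T : Set (ι → ℝ)) : Set (ι → ℝ))) := by
  rw [image_expI_span_eq hT]
  exact (isCompact_parallelepiped _).image (continuous_expI.comp (by fun_prop))

lemma exp_eq_iff_of_ne_zero {u : ℂ} (hu : u ≠ 0) (z : ℂ) :
    exp z = u ↔ z.re = Real.log ‖u‖ ∧ exp (z.im * I) = u / ‖u‖ := by
  have hz : exp z = Real.exp z.re * exp (z.im * I) := by
    rw [ofReal_exp, ← exp_add, re_add_im]
  constructor
  · rintro rfl
    rw [norm_exp, Real.log_exp, hz,
      mul_div_cancel_left₀ _ (ofReal_ne_zero.2 (Real.exp_pos _).ne')]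
    exact ⟨rfl, rfl⟩
  · rintro ⟨hre, him⟩
    rw [hz, hre, him, Real.exp_log (norm_pos_iff.2 hu),
      mul_div_cancel₀ _ (ofReal_ne_zero.2 (norm_ne_zero_iff.2 hu))]

lemma preimage_image_exp_eq (R Θ : Set (ι → ℝ)) :
    (fun v : {v : ι → ℂ // ∀ i, v i ≠ 0} => (v : ι → ℂ)) ⁻¹'
        ((fun (z : ι → ℂ) i => exp (z i)) ''
          {z | (fun i => (z i).re) ∈ R ∧ (fun i => (z i).im) ∈ Θ}) =
      (fun (v : {v : ι → ℂ // ∀ i, v i ≠ 0}) i => Real.log ‖v.1 i‖) ⁻¹' R ∩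
        (fun (v : {v : ι → ℂ // ∀ i, v i ≠ 0}) i => v.1 i / (‖v.1 i‖ : ℂ)) ⁻¹' (expI '' Θ) := by
  ext v
  simp only [mem_preimage, mem_image, mem_inter_iff, mem_ofPred_eq]
  constructor
  · rintro ⟨z, ⟨hre, him⟩, hzv⟩
    have hz i := (exp_eq_iff_of_ne_zero (v.2 i) (z i)).1 (congrFun hzv i)
    exact ⟨funext (fun i => (hz i).1) ▸ hre, _, him, funext fun i => (hz i).2⟩
  · rintro ⟨hR, y, hy, hyv⟩
    refine ⟨fun i => Real.log ‖v.1 i‖ + y i * I, ⟨by simpa using hR, by simpa using hy⟩,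
      funext fun i =>
        (exp_eq_iff_of_ne_zero (v.2 i) _).2 ⟨by simp, by simpa [expI] using congrFun hyv i⟩⟩

lemma continuous_log_norm_coe :
    Continuous fun v : {v : ι → ℂ // ∀ i, v i ≠ 0} => fun i => Real.log ‖v.1 i‖ :=
  continuous_pi fun i => ((continuous_apply i).comp continuous_subtype_val).norm.log
    fun v => norm_ne_zero_iff.2 (v.2 i)

lemma continuous_div_norm_coe :
    Continuous fun v : {v : ι → ℂ // ∀ i, v i ≠ 0} => fun i => v.1 i / (‖v.1 i‖ : ℂ) :=
  continuous_pi fun i => ((continuous_apply i).comp continuous_subtype_val).div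
    (continuous_ofReal.comp ((continuous_apply i).comp continuous_subtype_val).norm)
    fun v => ofReal_ne_zero.2 (norm_ne_zero_iff.2 (v.2 i))

theorem image_exp_rational_subspace_isClosed_general
    (m : ℕ) (W : Submodule ℝ (Fin m → ℝ))
    (hW : ∃ S : Set (Fin m → ℝ),
      (∀ v ∈ S, ∀ i, ∃ q : ℚ, v i = (q : ℝ)) ∧ W = Submodule.span ℝ S) :
    IsClosed
      ((fun v : {v : Fin m → ℂ // ∀ i, v i ≠ 0} => (v : Fin m → ℂ)) ⁻¹'
        ((fun z : Fin m → ℂ => fun i => Complex.exp (z i)) ''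
          {z : Fin m → ℂ | (fun i => (z i).re) ∈ W ∧ (fun i => (z i).im) ∈ W})) := by
  obtain ⟨S, hS, rfl⟩ := hW
  obtain ⟨T, hT, hTS⟩ := exists_finset_subset_intLattice_span_eq hS
  simp_rw [← SetLike.mem_coe, preimage_image_exp_eq, ← hTS]
  exact ((span ℝ _).closed_of_finiteDimensional.preimage continuous_log_norm_coe).inter
    ((isCompact_image_expI_span hT).isClosed.preimage continuous_div_norm_coe)

/-- Let `W ⊆ ℝ^m` be a linear subspace spanned by vectors with rational coordinates.
Then the image under the coordinatewise complex exponential of the set of `z ∈ ℂ^m`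
whose coordinatewise real part and imaginary part both lie in `W` is a closed subset of
the algebraic torus `{v ∈ ℂ^m : all vᵢ ≠ 0}` in its subspace topology. -/
theorem image_exp_rational_subspace_isClosed
    (m : ℕ) (hm : 1 ≤ m) (W : Submodule ℝ (Fin m → ℝ))
    (hW : ∃ S : Set (Fin m → ℝ),
      (∀ v ∈ S, ∀ i, ∃ q : ℚ, v i = (q : ℝ)) ∧ W = Submodule.span ℝ S) :
    IsClosed
      ((fun v : {v : Fin m → ℂ // ∀ i, v i ≠ 0} => (v : Fin m → ℂ)) ⁻¹'
        ((fun z : Fin m → ℂ => fun i => Complex.exp (z i)) ''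
          {z : Fin m → ℂ | (fun i => (z i).re) ∈ W ∧ (fun i => (z i).im) ∈ W})) :=
  image_exp_rational_subspace_isClosed_general m W hW
end
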